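/- arXiv:1507.06740 — 4 statements merged into one kernel-verified Lean document; each statement's English description precedes it below -/
import Mathlib

section
/- Algebraic Bethe ansatz for the six-vertex model: let M ≥ N ≥ 1, let w₁,…,w_M ∈ ℂ be nonzero, and let v₁,…,v_N ∈ ℂ be nonzero and pairwise distinct. Suppose the Bethe ansatz equations ∏_{k=1}^M (w_k/v_j − β) = (−1)^{N+1} hold for every j = 1,…,N. Then for every v ∈ ℂ with v ∉ {v₁,…,v_N}, the vector Ψ = B(v₁,{w})∘⋯∘B(v_N,{w}) |Ω⟩ satisfies (A(v,{w}) + D(v,{w})) Ψ = Λ(v) Ψ, where Λ(v) = ∏_{l=1}^M (1 − βv/w_l) · ∏_{k=1}^N (v+v_k)/(v_k−v) + ∏_{l=1}^M (v/w_l) · ∏_{k=1}^N (v+v_k)/(v−v_k). -/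
noncomputable section

/-- The six-vertex L-operator, as a matrix on ℂ² ⊗ ℂ² in the ordered basis
(e₀⊗e₀, e₀⊗e₁, e₁⊗e₀, e₁⊗e₁); the first factor is the auxiliary space. -/
def L6 (β v : ℂ) : Matrix (Fin 2 × Fin 2) (Fin 2 × Fin 2) ℂ :=
  fun p q =>
    if p = ((0 : Fin 2), (0 : Fin 2)) ∧ q = (0, 0) then 1 - β * v
    else if p = (0, 1) ∧ q = (0, 1) then 1 + β * v
    else if p = (0, 1) ∧ q = (1, 0) then 2 * v
    else if p = (1, 0) ∧ q = (0, 1) then 1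
    else if p = (1, 0) ∧ q = (1, 0) then v
    else if p = (1, 1) ∧ q = (1, 1) then v
    else 0

/-- A two-site operator acting on the auxiliary space ℂ²_a and the j-th site of
(ℂ²)^{⊗M}, as a matrix on ℂ²_a ⊗ (ℂ²)^{⊗M}. -/
def siteOp (M : ℕ) (L : Matrix (Fin 2 × Fin 2) (Fin 2 × Fin 2) ℂ) (j : Fin M) :
    Matrix (Fin 2 × (Fin M → Fin 2)) (Fin 2 × (Fin M → Fin 2)) ℂ :=
  fun p q => L (p.1, p.2 j) (q.1, q.2 j) *
    (if ∀ k, k ≠ j → p.2 k = q.2 k then 1 else 0)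

/-- The inhomogeneous monodromy matrix
T_a(v,{w}) = L_{aM}(v/w₁) ∘ ⋯ ∘ L_{a1}(v/w_M) (site 1 acts first). -/
def monodromy (M : ℕ) (β v : ℂ) (w : Fin M → ℂ) :
    Matrix (Fin 2 × (Fin M → Fin 2)) (Fin 2 × (Fin M → Fin 2)) ℂ :=
  (List.ofFn fun k : Fin M => siteOp M (L6 β (v / w k)) k.rev).prod

/-- A(v,{w}) = ⟨0|_a T_a(v,{w}) |0⟩_a. -/
def Aop (M : ℕ) (β v : ℂ) (w : Fin M → ℂ) :
    Matrix (Fin M → Fin 2) (Fin M → Fin 2) ℂ :=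
  fun s s' => monodromy M β v w (0, s) (0, s')

/-- B(v,{w}) = ⟨0|_a T_a(v,{w}) |1⟩_a. -/
def Bop (M : ℕ) (β v : ℂ) (w : Fin M → ℂ) :
    Matrix (Fin M → Fin 2) (Fin M → Fin 2) ℂ :=
  fun s s' => monodromy M β v w (0, s) (1, s')

/-- C(v,{w}) = ⟨1|_a T_a(v,{w}) |0⟩_a. -/
def Cop (M : ℕ) (β v : ℂ) (w : Fin M → ℂ) :
    Matrix (Fin M → Fin 2) (Fin M → Fin 2) ℂ :=
  fun s s' => monodromy M β v w (1, s) (0, s')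

/-- D(v,{w}) = ⟨1|_a T_a(v,{w}) |1⟩_a. -/
def Dop (M : ℕ) (β v : ℂ) (w : Fin M → ℂ) :
    Matrix (Fin M → Fin 2) (Fin M → Fin 2) ℂ :=
  fun s s' => monodromy M β v w (1, s) (1, s')

/-- The vacuum vector |Ω⟩ = e₀^{⊗M}, as a coordinate vector. -/
def vac (M : ℕ) : (Fin M → Fin 2) → ℂ := fun s => if s = (fun _ => 0) then 1 else 0

/-!
The monodromy matrix satisfies the RTT relation
`R₁₂(u,v) T₁(u) T₂(v) = T₂(v) T₁(u) R₁₂(u,v)`: the local RLL relation for `L6` holds at every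
site, and it passes through the product because operators acting on different sites and different
auxiliary spaces commute. Entries of the RTT relation give the exchange relations for
`A(u)B(v)`, `D(u)B(v)` and `B(u)B(v)`. The vacuum is an eigenvector of `A` and `D`, so moving
`A(u)` and `D(u)` through the `B(v_j)` produces `Λ(u) Ψ` plus, for every `j`, an unwanted term
proportional to `B(u) ∏_{k ≠ j} B(v_k) |Ω⟩`; the Bethe equation for `v_j` says precisely that the
two coefficients of this term cancel.
-/

open Matrix Finset

theorem sum_ite_update_eq_self {ι β γ : Type*} [Fintype ι] [DecidableEq ι] [Fintype β]
    [DecidableEq β] [AddCommMonoid γ] (s : ι → β) (j : ι) (F : (ι → β) → γ) :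
    ∑ r, (if Function.update s j (r j) = r then F r else 0) =
      ∑ x, F (Function.update s j x) := by
  rw [← sum_filter, ← sum_image fun x _ y _ h => Function.update_injective s j h]
  congr 1
  ext r
  simp only [mem_filter, mem_univ, true_and, mem_image]
  exact ⟨fun h => ⟨r j, h⟩, fun ⟨x, hx⟩ => hx ▸ by simp⟩

theorem List.prod_ofFn_mul_prod_ofFn {G : Type*} [Monoid G] {n : ℕ} (f g : Fin n → G)
    (h : ∀ i j, j < i → Commute (f i) (g j)) :
    (List.ofFn f).prod * (List.ofFn g).prod = (List.ofFn fun i => f i * g i).prod := by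
  induction n with
  | zero => simp
  | succ n ih =>
    have hcomm : Commute (List.ofFn fun i => f i.succ).prod (g 0) :=
      Commute.list_prod_left _ _ fun x hx => by
        obtain ⟨i, rfl⟩ := List.mem_ofFn.mp hx
        exact h _ _ (Fin.succ_pos i)
    simp only [List.ofFn_succ, List.prod_cons]
    rw [← ih _ _ fun i j hij => h _ _ (Fin.succ_lt_succ_iff.mpr hij), mul_assoc, mul_assoc,
      ← mul_assoc _ (g 0), hcomm.eq, mul_assoc]

theorem SemiconjBy.prod_ofFn {G : Type*} [Monoid G] {n : ℕ} {a : G} {f g : Fin n → G}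
    (h : ∀ i, SemiconjBy a (f i) (g i)) :
    SemiconjBy a (List.ofFn f).prod (List.ofFn g).prod := by
  induction n with
  | zero => simp [SemiconjBy.one_right]
  | succ n ih =>
    simp only [List.ofFn_succ, List.prod_cons]
    exact (h 0).mul_right (ih fun i => h i.succ)

theorem List.prod_ofFn_mulVec_eq_smul {σ K : Type*} [Fintype σ] [DecidableEq σ] [CommRing K]
    {n : ℕ} {f : Fin n → Matrix σ σ K} {c : Fin n → K} {x : σ → K}
    (h : ∀ i, f i *ᵥ x = c i • x) : (List.ofFn f).prod *ᵥ x = (∏ i, c i) • x := by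
  induction n with
  | zero => simp
  | succ n ih =>
    rw [List.ofFn_succ, List.prod_cons, ← mulVec_mulVec, ih fun i => h i.succ, mulVec_smul, h,
      smul_smul, Fin.prod_univ_succ, mul_comm]

section BetheVector

variable {σ ι K : Type*} [Fintype σ] [DecidableEq σ] [CommRing K]
  (B : K → Matrix σ σ K) (hB : ∀ x y, Commute (B x) (B y)) (Ω : σ → K)

def betheVector (v : ι → K) (s : Finset ι) : σ → K :=
  s.noncommProd (fun j => B (v j)) (Pairwise.set_pairwise (fun x y _ => hB (v x) (v y)) _) *ᵥ Ω

variable {B hB Ω}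

theorem betheVector_empty (v : ι → K) : betheVector B hB Ω v ∅ = Ω := by
  simp [betheVector]

theorem betheVector_univ {n : ℕ} (v : Fin n → K) :
    betheVector B hB Ω v univ = (List.ofFn fun j => B (v j)).prod *ᵥ Ω := by
  rw [betheVector, List.ofFn_eq_map, ← noncommProd_toFinset _ _ _ (List.nodup_finRange n)]
  · exact congrArg (· *ᵥ Ω) (noncommProd_congr (List.toFinset_finRange n).symm (fun _ _ => rfl) _)
  · exact Pairwise.set_pairwise (fun x y _ => hB (v x) (v y)) _

variable [DecidableEq ι]

theorem betheVector_insert (v : ι → K) {a : ι} {s : Finset ι} (ha : a ∉ s) :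
    betheVector B hB Ω v (insert a s) = B (v a) *ᵥ betheVector B hB Ω v s := by
  rw [betheVector, noncommProd_insert_of_notMem _ _ _ _ ha, ← mulVec_mulVec, betheVector]

theorem mulVec_mulVec_betheVector_insert (v : ι → K) (x : K) {a : ι} {s : Finset ι}
    (ha : a ∉ s) :
    B (v a) *ᵥ (B x *ᵥ betheVector B hB Ω v s) = B x *ᵥ betheVector B hB Ω v (insert a s) := by
  rw [mulVec_mulVec, (hB _ _).eq, ← mulVec_mulVec, betheVector_insert v ha]

theorem mulVec_betheVector (T : K → Matrix σ σ K) (α : K → K) (f g : K → K → K)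
    (hrel : ∀ u x, u ≠ x → T u * B x = f u x • (B x * T u) + g u x • (B u * T x))
    (hvac : ∀ u, T u *ᵥ Ω = α u • Ω)
    (hfg : ∀ u x y, u ≠ x → u ≠ y → x ≠ y → f u x * g u y + g u x * g x y = g u y * f y x)
    {v : ι → K} (hv : Function.Injective v) (s : Finset ι) {u : K} (hu : ∀ j ∈ s, u ≠ v j) :
    T u *ᵥ betheVector B hB Ω v s =
      (α u * ∏ k ∈ s, f u (v k)) • betheVector B hB Ω v s +
        ∑ j ∈ s, (g u (v j) * α (v j) * ∏ k ∈ s.erase j, f (v j) (v k)) •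
          B u *ᵥ betheVector B hB Ω v (s.erase j) := by
  induction s using Finset.induction_on generalizing u with
  | empty => simp [betheVector_empty, hvac]
  | insert a t ha ih =>
    have hua : u ≠ v a := hu a (mem_insert_self a t)
    have hut : ∀ j ∈ t, u ≠ v j := fun j hj => hu j (mem_insert_of_mem hj)
    have hat : ∀ j ∈ t, v a ≠ v j := fun j hj h => ha (hv h ▸ hj)
    have hexch : T u *ᵥ betheVector B hB Ω v (insert a t) =
        f u (v a) • B (v a) *ᵥ (T u *ᵥ betheVector B hB Ω v t) +
          g u (v a) • B u *ᵥ (T (v a) *ᵥ betheVector B hB Ω v t) := by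
      rw [betheVector_insert v ha, mulVec_mulVec, hrel u (v a) hua, add_mulVec, smul_mulVec,
        smul_mulVec, mulVec_mulVec, mulVec_mulVec]
    -- `hfg` is what merges the two contributions to the unwanted term of `j`.
    have hunwanted : ∀ j ∈ t,
        f u (v a) • (g u (v j) * α (v j) * ∏ k ∈ t.erase j, f (v j) (v k)) •
            B (v a) *ᵥ (B u *ᵥ betheVector B hB Ω v (t.erase j)) +
          g u (v a) • (g (v a) (v j) * α (v j) * ∏ k ∈ t.erase j, f (v j) (v k)) •
            B u *ᵥ (B (v a) *ᵥ betheVector B hB Ω v (t.erase j)) =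
        (g u (v j) * α (v j) * ∏ k ∈ (insert a t).erase j, f (v j) (v k)) •
          B u *ᵥ betheVector B hB Ω v ((insert a t).erase j) := by
      intro j hj
      have haj : a ≠ j := fun h => ha (h ▸ hj)
      have ha' : a ∉ t.erase j := fun h => ha (mem_of_mem_erase h)
      rw [erase_insert_of_ne haj, prod_insert ha',
        mulVec_mulVec_betheVector_insert v u ha', ← betheVector_insert v ha', smul_smul,
        smul_smul, ← add_smul]
      congr 1
      linear_combination (α (v j) * ∏ k ∈ t.erase j, f (v j) (v k)) *
        hfg u (v a) (v j) hua (hut j hj) (hat j hj)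
    rw [hexch, ih hut, ih hat, prod_insert ha, sum_insert ha, erase_insert ha,
      ← sum_congr rfl hunwanted, betheVector_insert v ha]
    simp only [mulVec_add, mulVec_smul, mulVec_sum, smul_add, smul_sum, sum_add_distrib]
    module

end BetheVector

namespace SixVertex

section AuxiliarySpaces

variable {α σ R : Type*} [DecidableEq σ] [Semiring R]

def onAuxPair (X : Matrix (α × α) (α × α) R) : Matrix ((α × α) × σ) ((α × α) × σ) R :=
  of fun p q => if p.2 = q.2 then X p.1 q.1 else 0

theorem onAuxPair_smul (c : R) (X : Matrix (α × α) (α × α) R) :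
    onAuxPair (σ := σ) (c • X) = c • onAuxPair X := by
  ext p q
  simp [onAuxPair]

variable [Fintype α] [Fintype σ]

-- Rows and columns are indexed by `((a₁, a₂), s)`: two auxiliary spins and a quantum state.
def onFirstAux [DecidableEq α] :
    Matrix (α × σ) (α × σ) R →* Matrix ((α × α) × σ) ((α × α) × σ) R where
  toFun X := of fun p q => if p.1.2 = q.1.2 then X (p.1.1, p.2) (q.1.1, q.2) else 0
  map_one' := by
    ext ⟨⟨a, b⟩, s⟩ ⟨⟨c, d⟩, t⟩
    simp only [of_apply, one_apply, Prod.mk.injEq]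
    split_ifs <;> tauto
  map_mul' X Y := by
    ext ⟨⟨a, b⟩, s⟩ ⟨⟨c, d⟩, t⟩
    simp only [of_apply, mul_apply, Fintype.sum_prod_type, ite_mul, zero_mul, mul_ite, mul_zero]
    rw [sum_comm]
    simp [sum_comm (γ := α)]

def onSecondAux [DecidableEq α] :
    Matrix (α × σ) (α × σ) R →* Matrix ((α × α) × σ) ((α × α) × σ) R where
  toFun X := of fun p q => if p.1.1 = q.1.1 then X (p.1.2, p.2) (q.1.2, q.2) else 0
  map_one' := by
    ext ⟨⟨a, b⟩, s⟩ ⟨⟨c, d⟩, t⟩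
    simp only [of_apply, one_apply, Prod.mk.injEq]
    split_ifs <;> tauto
  map_mul' X Y := by
    ext ⟨⟨a, b⟩, s⟩ ⟨⟨c, d⟩, t⟩
    simp only [of_apply, mul_apply, Fintype.sum_prod_type, ite_mul, zero_mul, mul_ite, mul_zero]
    rw [sum_comm]
    simp [sum_comm (γ := α)]

theorem onFirstAux_mul_onSecondAux_apply [DecidableEq α] (X Y : Matrix (α × σ) (α × σ) R)
    (a b c d : α) (s t : σ) :
    (onFirstAux X * onSecondAux Y) ((a, b), s) ((c, d), t) =
      ∑ r, X (a, s) (c, r) * Y (b, r) (d, t) := by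
  simp only [onFirstAux, onSecondAux, MonoidHom.coe_mk, OneHom.coe_mk, of_apply, mul_apply,
    Fintype.sum_prod_type, ite_mul, zero_mul, mul_ite, mul_zero]
  rw [sum_comm]
  simp [sum_ite_eq]

theorem onSecondAux_mul_onFirstAux_apply [DecidableEq α] (X Y : Matrix (α × σ) (α × σ) R)
    (a b c d : α) (s t : σ) :
    (onSecondAux Y * onFirstAux X) ((a, b), s) ((c, d), t) =
      ∑ r, Y (b, s) (d, r) * X (a, r) (c, t) := by
  simp only [onFirstAux, onSecondAux, MonoidHom.coe_mk, OneHom.coe_mk, of_apply, mul_apply,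
    Fintype.sum_prod_type, ite_mul, zero_mul, mul_ite, mul_zero]
  rw [sum_comm]
  simp [sum_ite_eq]

theorem onAuxPair_mul_apply (X : Matrix (α × α) (α × α) R)
    (Z : Matrix ((α × α) × σ) ((α × α) × σ) R) (p : α × α) (s : σ) (q : (α × α) × σ) :
    (onAuxPair (σ := σ) X * Z) (p, s) q = ∑ p', X p p' * Z (p', s) q := by
  simp [onAuxPair, mul_apply, Fintype.sum_prod_type]

theorem mul_onAuxPair_apply (X : Matrix (α × α) (α × α) R)
    (Z : Matrix ((α × α) × σ) ((α × α) × σ) R) (p : (α × α) × σ) (q : α × α) (t : σ) :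
    (Z * onAuxPair (σ := σ) X) p (q, t) = ∑ q', Z p (q', t) * X q' q := by
  simp [onAuxPair, mul_apply, Fintype.sum_prod_type]

end AuxiliarySpaces

section SiteOperators

variable {M : ℕ}

theorem siteOp_apply (L : Matrix (Fin 2 × Fin 2) (Fin 2 × Fin 2) ℂ) (j : Fin M) (a c : Fin 2)
    (s t : Fin M → Fin 2) :
    siteOp M L j (a, s) (c, t) =
      L (a, s j) (c, t j) * if Function.update s j (t j) = t then 1 else 0 := by
  simp only [siteOp, Function.update_eq_iff, true_and]

theorem sum_siteOp_mul (L : Matrix (Fin 2 × Fin 2) (Fin 2 × Fin 2) ℂ) (j : Fin M) (a c : Fin 2)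
    (s : Fin M → Fin 2) (G : (Fin M → Fin 2) → ℂ) :
    ∑ r, siteOp M L j (a, s) (c, r) * G r =
      ∑ x, L (a, s j) (c, x) * G (Function.update s j x) := by
  simp only [siteOp_apply, mul_ite, mul_one, mul_zero, ite_mul, zero_mul]
  rw [sum_ite_update_eq_self s j fun r => L (a, s j) (c, r j) * G r]
  simp

theorem sum_siteOp_mul_siteOp_self (L₁ L₂ : Matrix (Fin 2 × Fin 2) (Fin 2 × Fin 2) ℂ)
    (j : Fin M) (a b c d : Fin 2) (s t : Fin M → Fin 2) :
    ∑ r, siteOp M L₁ j (a, s) (c, r) * siteOp M L₂ j (b, r) (d, t) =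
      (∑ x, L₁ (a, s j) (c, x) * L₂ (b, x) (d, t j)) *
        if Function.update s j (t j) = t then 1 else 0 := by
  rw [sum_siteOp_mul]
  simp only [siteOp_apply, Function.update_self, Function.update_idem, sum_mul, mul_assoc]

theorem sum_siteOp_mul_siteOp_of_ne (L₁ L₂ : Matrix (Fin 2 × Fin 2) (Fin 2 × Fin 2) ℂ)
    {j k : Fin M} (hjk : j ≠ k) (a b c d : Fin 2) (s t : Fin M → Fin 2) :
    ∑ r, siteOp M L₁ j (a, s) (c, r) * siteOp M L₂ k (b, r) (d, t) =
      L₁ (a, s j) (c, t j) * L₂ (b, s k) (d, t k) *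
        if Function.update (Function.update s j (t j)) k (t k) = t then 1 else 0 := by
  rw [sum_siteOp_mul, sum_eq_single (t j)]
  · rw [siteOp_apply, Function.update_of_ne hjk.symm, mul_assoc]
  · intro x _ hx
    rw [siteOp_apply, if_neg, mul_zero, mul_zero]
    intro h
    exact hx (by simpa [Function.update_of_ne hjk] using congrFun h j)
  · simp

theorem siteOp_commute_of_ne (L₁ L₂ : Matrix (Fin 2 × Fin 2) (Fin 2 × Fin 2) ℂ) {j k : Fin M}
    (hjk : j ≠ k) :
    Commute (onFirstAux (siteOp M L₁ j)) (onSecondAux (siteOp M L₂ k)) := by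
  ext ⟨⟨a, b⟩, s⟩ ⟨⟨c, d⟩, t⟩
  rw [onFirstAux_mul_onSecondAux_apply, onSecondAux_mul_onFirstAux_apply,
    sum_siteOp_mul_siteOp_of_ne _ _ hjk, sum_siteOp_mul_siteOp_of_ne _ _ hjk.symm,
    Function.update_comm hjk]
  ring

end SiteOperators

-- The R-matrix of `L6` (see `L6_RLL`). It is homogeneous of degree one in `(u, v)`, which lets
-- the RLL relation for `L6 β u`, `L6 β v` be rescaled to `L6 β (u / w)`, `L6 β (v / w)`.
def R6 (u v : ℂ) : Matrix (Fin 2 × Fin 2) (Fin 2 × Fin 2) ℂ :=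
  fun p q =>
    if p = ((0 : Fin 2), (0 : Fin 2)) ∧ q = (0, 0) then u + v
    else if p = (0, 1) ∧ q = (0, 1) then v - u
    else if p = (0, 1) ∧ q = (1, 0) then 2 * u
    else if p = (1, 0) ∧ q = (0, 1) then 2 * v
    else if p = (1, 0) ∧ q = (1, 0) then u - v
    else if p = (1, 1) ∧ q = (1, 1) then u + v
    else 0

theorem R6_mul_mul (c u v : ℂ) : R6 (c * u) (c * v) = c • R6 u v := by
  ext p q
  simp only [R6, Matrix.smul_apply, smul_eq_mul]
  split_ifs <;> ring

theorem L6_RLL (β u v : ℂ) (a b c d x y : Fin 2) :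
    ∑ a', ∑ b', R6 u v (a, b) (a', b') * ∑ z, L6 β u (a', x) (c, z) * L6 β v (b', z) (d, y) =
      ∑ c', ∑ d',
        (∑ z, L6 β v (b, x) (d', z) * L6 β u (a, z) (c', y)) * R6 u v (c', d') (c, d) := by
  fin_cases a <;> fin_cases b <;> fin_cases c <;> fin_cases d <;> fin_cases x <;> fin_cases y <;>
    simp [Fin.sum_univ_two, L6, R6] <;> ring

theorem semiconjBy_siteOp_RLL (β u v : ℂ) {M : ℕ} (j : Fin M) :
    SemiconjBy (onAuxPair (R6 u v))
      (onFirstAux (siteOp M (L6 β u) j) * onSecondAux (siteOp M (L6 β v) j))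
      (onSecondAux (siteOp M (L6 β v) j) * onFirstAux (siteOp M (L6 β u) j)) := by
  ext ⟨⟨a, b⟩, s⟩ ⟨⟨c, d⟩, t⟩
  rw [onAuxPair_mul_apply, mul_onAuxPair_apply]
  simp only [Fintype.sum_prod_type, onFirstAux_mul_onSecondAux_apply,
    onSecondAux_mul_onFirstAux_apply, sum_siteOp_mul_siteOp_self, ← mul_assoc,
    mul_right_comm _ (ite _ _ _), ← sum_mul, L6_RLL]

theorem semiconjBy_siteOp_RLL_div (β u v : ℂ) {c : ℂ} (hc : c ≠ 0) {M : ℕ} (j : Fin M) :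
    SemiconjBy (onAuxPair (R6 u v))
      (onFirstAux (siteOp M (L6 β (u / c)) j) * onSecondAux (siteOp M (L6 β (v / c)) j))
      (onSecondAux (siteOp M (L6 β (v / c)) j) * onFirstAux (siteOp M (L6 β (u / c)) j)) := by
  have hR : R6 u v = c • R6 (u / c) (v / c) := by
    rw [← R6_mul_mul, mul_div_cancel₀ _ hc, mul_div_cancel₀ _ hc]
  rw [hR, onAuxPair_smul]
  exact (semiconjBy_siteOp_RLL β (u / c) (v / c) j).smul_left c

theorem monodromy_RTT {M : ℕ} (β : ℂ) {w : Fin M → ℂ} (hw : ∀ l, w l ≠ 0) (u v : ℂ) :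
    SemiconjBy (onAuxPair (R6 u v))
      (onFirstAux (monodromy M β u w) * onSecondAux (monodromy M β v w))
      (onSecondAux (monodromy M β v w) * onFirstAux (monodromy M β u w)) := by
  simp only [monodromy, map_list_prod, List.map_ofFn, Function.comp_def]
  rw [List.prod_ofFn_mul_prod_ofFn, List.prod_ofFn_mul_prod_ofFn]
  · exact SemiconjBy.prod_ofFn fun k => semiconjBy_siteOp_RLL_div β u v (hw k) k.rev
  · exact fun i j hij => (siteOp_commute_of_ne _ _ (Fin.rev_injective.ne hij.ne)).symm
  · exact fun i j hij => siteOp_commute_of_ne _ _ (Fin.rev_injective.ne hij.ne')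

section Exchange

variable {M : ℕ} (β : ℂ) {w : Fin M → ℂ}

def monodromyBlock (M : ℕ) (β u : ℂ) (w : Fin M → ℂ) (a b : Fin 2) :
    Matrix (Fin M → Fin 2) (Fin M → Fin 2) ℂ :=
  of fun s t => monodromy M β u w (a, s) (b, t)

theorem monodromyBlock_RTT (hw : ∀ l, w l ≠ 0) (u v : ℂ) (a b c d : Fin 2) :
    ∑ a', ∑ b', R6 u v (a, b) (a', b') •
        (monodromyBlock M β u w a' c * monodromyBlock M β v w b' d) =
      ∑ c', ∑ d', R6 u v (c', d') (c, d) •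
        (monodromyBlock M β v w b d' * monodromyBlock M β u w a c') := by
  ext s t
  have h := congrFun (congrFun (monodromy_RTT β hw u v) ((a, b), s)) ((c, d), t)
  rw [onAuxPair_mul_apply, mul_onAuxPair_apply] at h
  simp only [Fintype.sum_prod_type, onFirstAux_mul_onSecondAux_apply,
    onSecondAux_mul_onFirstAux_apply] at h
  simpa [Matrix.sum_apply, mul_apply, monodromyBlock, mul_comm] using h

theorem monodromyBlock_zero_zero (u : ℂ) : monodromyBlock M β u w 0 0 = Aop M β u w := rfl
theorem monodromyBlock_zero_one (u : ℂ) : monodromyBlock M β u w 0 1 = Bop M β u w := rfl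
theorem monodromyBlock_one_one (u : ℂ) : monodromyBlock M β u w 1 1 = Dop M β u w := rfl

theorem Aop_mul_Bop_RTT (hw : ∀ l, w l ≠ 0) (u v : ℂ) :
    (u + v) • (Aop M β u w * Bop M β v w) =
      (v - u) • (Bop M β v w * Aop M β u w) + (2 * v) • (Aop M β v w * Bop M β u w) := by
  simpa [Fin.sum_univ_two, R6, monodromyBlock_zero_zero, monodromyBlock_zero_one]
    using monodromyBlock_RTT β hw u v 0 0 0 1

theorem Dop_mul_Bop_RTT (hw : ∀ l, w l ≠ 0) (u v : ℂ) :
    (2 * v) • (Bop M β u w * Dop M β v w) + (u - v) • (Dop M β u w * Bop M β v w) =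
      (u + v) • (Bop M β v w * Dop M β u w) := by
  simpa [Fin.sum_univ_two, R6, monodromyBlock_one_one, monodromyBlock_zero_one]
    using monodromyBlock_RTT β hw u v 1 0 1 1

theorem Bop_mul_Bop_RTT (hw : ∀ l, w l ≠ 0) (u v : ℂ) :
    (u + v) • (Bop M β u w * Bop M β v w) = (u + v) • (Bop M β v w * Bop M β u w) := by
  simpa [Fin.sum_univ_two, R6, monodromyBlock_zero_one]
    using monodromyBlock_RTT β hw u v 0 0 1 1

theorem continuous_monodromy : Continuous fun u => monodromy M β u w := by
  simp only [monodromy, List.ofFn_eq_map]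
  refine continuous_list_prod _ fun k _ => continuous_matrix fun p q => ?_
  simp only [siteOp, L6]
  split_ifs <;> fun_prop

theorem continuous_Bop : Continuous fun u => Bop M β u w :=
  continuous_matrix fun s t => (continuous_monodromy β).matrix_elem (0, s) (1, t)

-- The RTT relation only gives `(u + v) [B(u), B(v)] = 0`; continuity in `u` removes the factor.
theorem Bop_commute (hw : ∀ l, w l ≠ 0) (u v : ℂ) : Commute (Bop M β u w) (Bop M β v w) := by
  have hcont : Continuous fun x => Bop M β x w * Bop M β v w - Bop M β v w * Bop M β x w := by
    have := continuous_Bop (M := M) β (w := w)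
    fun_prop
  have hzero : (fun x => Bop M β x w * Bop M β v w - Bop M β v w * Bop M β x w) = 0 := by
    refine hcont.ext_on (dense_compl_singleton (-v)) continuous_const fun x hx => ?_
    have hxv : x + v ≠ 0 := fun h => hx (eq_neg_of_add_eq_zero_left h)
    exact sub_eq_zero.mpr (smul_right_injective _ hxv (Bop_mul_Bop_RTT β hw x v))
  exact sub_eq_zero.mp (congrFun hzero u)

theorem Aop_mul_Bop (hw : ∀ l, w l ≠ 0) {u v : ℂ} (h : u ≠ v) :
    Aop M β u w * Bop M β v w =
      ((u + v) / (v - u)) • (Bop M β v w * Aop M β u w) +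
        (2 * v / (u - v)) • (Bop M β u w * Aop M β v w) := by
  have huv : u - v ≠ 0 := sub_ne_zero.mpr h
  have hvu : v - u ≠ 0 := sub_ne_zero.mpr h.symm
  ext s t
  have e₁ := congr($(Aop_mul_Bop_RTT β hw u v) s t)
  have e₂ := congr($(Aop_mul_Bop_RTT β hw v u) s t)
  simp only [Matrix.smul_apply, Matrix.add_apply, smul_eq_mul] at e₁ e₂ ⊢
  field_simp
  linear_combination (-(u + v)) * e₁ + (-2 * v) * e₂

theorem Dop_mul_Bop (hw : ∀ l, w l ≠ 0) {u v : ℂ} (h : u ≠ v) :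
    Dop M β u w * Bop M β v w =
      ((u + v) / (u - v)) • (Bop M β v w * Dop M β u w) +
        (2 * v / (v - u)) • (Bop M β u w * Dop M β v w) := by
  have huv : u - v ≠ 0 := sub_ne_zero.mpr h
  have hvu : v - u ≠ 0 := sub_ne_zero.mpr h.symm
  ext s t
  have e := congr($(Dop_mul_Bop_RTT β hw u v) s t)
  simp only [Matrix.smul_apply, Matrix.add_apply, smul_eq_mul] at e ⊢
  field_simp
  linear_combination (v - u) * e

end Exchange

section Vacuum

variable {M : ℕ} (β : ℂ)

theorem L6_apply_zero_zero (c : ℂ) (p : Fin 2 × Fin 2) :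
    L6 β c p (0, 0) = if p = (0, 0) then 1 - β * c else 0 := by
  fin_cases p <;> simp [L6]

theorem L6_one_apply_one_zero (c : ℂ) (x : Fin 2) :
    L6 β c (1, x) (1, 0) = if x = 0 then c else 0 := by
  fin_cases x <;> simp [L6]

theorem siteOp_mulVec_single_vacuum (c : ℂ) (j : Fin M) :
    siteOp M (L6 β c) j *ᵥ Pi.single (0, 0) 1 = (1 - β * c) • Pi.single (0, 0) 1 := by
  ext ⟨a, s⟩
  rw [mulVec_single_one, col_apply, siteOp_apply, Pi.zero_apply, L6_apply_zero_zero]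
  rcases eq_or_ne (s j) 0 with h | h
  · rw [← h, Function.update_eq_self]
    simp [h, Pi.single_apply, ite_and]
    split_ifs <;> rfl
  · have hs : s ≠ 0 := fun hs => h (by simp [hs])
    simp [h, hs]

variable (M) in
def siteFixing (j : Fin M) :
    Submonoid (Matrix (Fin 2 × (Fin M → Fin 2)) (Fin 2 × (Fin M → Fin 2)) ℂ) where
  carrier := {X | ∀ p q, X p q ≠ 0 → p.2 j = q.2 j}
  mul_mem' {X Y} hX hY p q hXY := by
    obtain ⟨r, -, hr⟩ := Finset.exists_ne_zero_of_sum_ne_zero hXY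
    exact (hX p r (left_ne_zero_of_mul hr)).trans (hY r q (right_ne_zero_of_mul hr))
  one_mem' p q h := by
    by_contra hpq
    exact h (one_apply_ne fun hp => hpq (hp ▸ rfl))

theorem siteOp_mem_siteFixing (L : Matrix (Fin 2 × Fin 2) (Fin 2 × Fin 2) ℂ) {j k : Fin M}
    (hkj : k ≠ j) : siteOp M L k ∈ siteFixing M j := by
  intro p q h
  by_contra hpq
  exact h (by rw [siteOp, if_neg fun hall => hpq (hall j hkj.symm), mul_zero])

-- A path from `(1, Ω)` through aux state `0` flips the spin of the current site, and no later
-- factor acts on that site again, so only the path staying at aux state `1` survives.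
theorem prod_siteOp_apply_one_vacuum {n : ℕ} (c : Fin n → ℂ) {site : Fin n → Fin M}
    (hsite : Function.Injective site) (s : Fin M → Fin 2) :
    (List.ofFn fun k => siteOp M (L6 β (c k)) (site k)).prod (1, s) (1, 0) =
      if s = 0 then ∏ k, c k else 0 := by
  induction n generalizing s with
  | zero => simp [one_apply]
  | succ n ih =>
    rw [List.ofFn_succ, List.prod_cons, mul_apply, Fintype.sum_prod_type, Fin.sum_univ_two]
    set Q := (List.ofFn fun k : Fin n => siteOp M (L6 β (c k.succ)) (site k.succ)).prod
    have hQ : Q ∈ siteFixing M (site 0) :=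
      Submonoid.list_prod_mem _ fun X hX => by
        obtain ⟨k, rfl⟩ := List.mem_ofFn.mp hX
        exact siteOp_mem_siteFixing _ (hsite.ne (Fin.succ_ne_zero k))
    have hC : ∑ r, siteOp M (L6 β (c 0)) (site 0) (1, s) (0, r) * Q (0, r) (1, 0) = 0 :=
      sum_eq_zero fun r _ => by
        by_cases hr : Q (0, r) (1, 0) = 0
        · rw [hr, mul_zero]
        · rw [siteOp_apply, show r (site 0) = 0 from hQ _ _ hr, L6_apply_zero_zero]
          simp
    rw [hC, zero_add]
    have hD : ∀ r, Q (1, r) (1, 0) = if r = 0 then ∏ k : Fin n, c k.succ else 0 :=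
      ih _ (hsite.comp (Fin.succ_injective _))
    simp only [hD, mul_ite, mul_zero, sum_ite_eq', mem_univ, if_true]
    rw [siteOp_apply, Pi.zero_apply, L6_one_apply_one_zero, Fin.prod_univ_succ]
    rcases eq_or_ne (s (site 0)) 0 with h | h
    · rw [← h, Function.update_eq_self]
      simp [h]
    · have hs : s ≠ 0 := fun hs => h (by simp [hs])
      simp [h, hs]

theorem vac_eq_single : vac M = Pi.single 0 1 := by
  ext s
  simp [vac, Pi.single_apply, Pi.zero_def]

theorem Aop_mulVec_vac (u : ℂ) (w : Fin M → ℂ) :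
    Aop M β u w *ᵥ vac M = (∏ l, (1 - β * u / w l)) • vac M := by
  have h : monodromy M β u w *ᵥ Pi.single (0, 0) 1 =
      (∏ l, (1 - β * u / w l)) • Pi.single (0, 0) 1 :=
    List.prod_ofFn_mulVec_eq_smul fun k => by rw [siteOp_mulVec_single_vacuum, mul_div_assoc]
  ext s
  simpa [vac_eq_single, Aop, Pi.single_apply] using congrFun h (0, s)

theorem Dop_mulVec_vac (u : ℂ) (w : Fin M → ℂ) :
    Dop M β u w *ᵥ vac M = (∏ l, u / w l) • vac M := by
  ext s
  rw [vac_eq_single, mulVec_single_one, col_apply]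
  change monodromy M β u w (1, s) (1, 0) = _
  rw [monodromy, prod_siteOp_apply_one_vacuum β (fun l => u / w l) Fin.rev_injective]
  simp [Pi.single_apply]

end Vacuum

section BetheAnsatz

variable {M : ℕ} (β : ℂ) {w : Fin M → ℂ}

theorem Aop_exchange_coeffs_compat {u x y : ℂ} (hux : u ≠ x) (huy : u ≠ y) (hxy : x ≠ y) :
    (u + x) / (x - u) * (2 * y / (u - y)) + 2 * x / (u - x) * (2 * y / (x - y)) =
      2 * y / (u - y) * ((y + x) / (x - y)) := by
  field_simp [sub_ne_zero.mpr hux, sub_ne_zero.mpr hux.symm, sub_ne_zero.mpr huy,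
    sub_ne_zero.mpr hxy]
  ring

theorem Dop_exchange_coeffs_compat {u x y : ℂ} (hux : u ≠ x) (huy : u ≠ y) (hxy : x ≠ y) :
    (u + x) / (u - x) * (2 * y / (y - u)) + 2 * x / (x - u) * (2 * y / (y - x)) =
      2 * y / (y - u) * ((y + x) / (y - x)) := by
  field_simp [sub_ne_zero.mpr hux, sub_ne_zero.mpr hux.symm, sub_ne_zero.mpr huy.symm,
    sub_ne_zero.mpr hxy.symm]
  ring

theorem Aop_mulVec_betheVector (hw : ∀ l, w l ≠ 0) {ι : Type*} [DecidableEq ι] {v : ι → ℂ}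
    (hv : Function.Injective v) (s : Finset ι) {u : ℂ} (hu : ∀ j ∈ s, u ≠ v j) :
    Aop M β u w *ᵥ betheVector (fun x => Bop M β x w) (Bop_commute β hw) (vac M) v s =
      ((∏ l, (1 - β * u / w l)) * ∏ k ∈ s, (u + v k) / (v k - u)) •
          betheVector (fun x => Bop M β x w) (Bop_commute β hw) (vac M) v s +
        ∑ j ∈ s, (2 * v j / (u - v j) * (∏ l, (1 - β * v j / w l)) *
            ∏ k ∈ s.erase j, (v j + v k) / (v k - v j)) •
          Bop M β u w *ᵥ
            betheVector (fun x => Bop M β x w) (Bop_commute β hw) (vac M) v (s.erase j) :=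
  mulVec_betheVector (fun u => Aop M β u w) (fun u => ∏ l, (1 - β * u / w l))
    (fun u x => (u + x) / (x - u)) (fun u x => 2 * x / (u - x)) (fun _ _ h => Aop_mul_Bop β hw h)
    (fun u => Aop_mulVec_vac β u w) (fun _ _ _ => Aop_exchange_coeffs_compat) hv s hu

theorem Dop_mulVec_betheVector (hw : ∀ l, w l ≠ 0) {ι : Type*} [DecidableEq ι] {v : ι → ℂ}
    (hv : Function.Injective v) (s : Finset ι) {u : ℂ} (hu : ∀ j ∈ s, u ≠ v j) :
    Dop M β u w *ᵥ betheVector (fun x => Bop M β x w) (Bop_commute β hw) (vac M) v s =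
      ((∏ l, u / w l) * ∏ k ∈ s, (u + v k) / (u - v k)) •
          betheVector (fun x => Bop M β x w) (Bop_commute β hw) (vac M) v s +
        ∑ j ∈ s, (2 * v j / (v j - u) * (∏ l, v j / w l) *
            ∏ k ∈ s.erase j, (v j + v k) / (v j - v k)) •
          Bop M β u w *ᵥ
            betheVector (fun x => Bop M β x w) (Bop_commute β hw) (vac M) v (s.erase j) :=
  mulVec_betheVector (fun u => Dop M β u w) (fun u => ∏ l, u / w l)
    (fun u x => (u + x) / (u - x)) (fun u x => 2 * x / (x - u)) (fun _ _ h => Dop_mul_Bop β hw h)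
    (fun u => Dop_mulVec_vac β u w) (fun _ _ _ => Dop_exchange_coeffs_compat) hv s hu

theorem unwanted_coeff_eq_zero (hw : ∀ l, w l ≠ 0) {N : ℕ} {v : Fin N → ℂ} {j : Fin N}
    (hvj : v j ≠ 0) (hBethe : ∏ k, (w k / v j - β) = (-1) ^ (N + 1)) (u : ℂ) :
    2 * v j / (u - v j) * (∏ l, (1 - β * v j / w l)) *
          ∏ k ∈ univ.erase j, (v j + v k) / (v k - v j) +
        2 * v j / (v j - u) * (∏ l, v j / w l) * ∏ k ∈ univ.erase j, (v j + v k) / (v j - v k) =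
      0 := by
  have hvac : ∏ l, (1 - β * v j / w l) = (-1) ^ (N + 1) * ∏ l, v j / w l := by
    rw [← hBethe, ← prod_mul_distrib]
    refine prod_congr rfl fun l _ => ?_
    field_simp [hw l]
  have hsign : ∏ k ∈ univ.erase j, (v j + v k) / (v k - v j) =
      (-1) ^ #(univ.erase j) * ∏ k ∈ univ.erase j, (v j + v k) / (v j - v k) := by
    rw [← prod_neg]
    exact prod_congr rfl fun k _ => by rw [← div_neg, neg_sub]
  have hcard : #(univ.erase j) + 1 = N := by
    rw [card_erase_add_one (mem_univ j), card_univ, Fintype.card_fin]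
  have heven : ((-1 : ℂ) ^ (N + 1)) * (-1) ^ #(univ.erase j) = 1 := by
    rw [← pow_add]
    exact Even.neg_one_pow ⟨#(univ.erase j) + 1, by omega⟩
  rw [hvac, hsign, ← neg_sub u, div_neg]
  linear_combination (2 * v j / (u - v j) * (∏ l, v j / w l) *
    ∏ k ∈ univ.erase j, (v j + v k) / (v j - v k)) * heven

end BetheAnsatz

end SixVertex

open SixVertex

theorem bethe_eigenstate_general (M N : ℕ) (β : ℂ)
    (w : Fin M → ℂ) (hw : ∀ l, w l ≠ 0)
    (v : Fin N → ℂ) (hvne : ∀ j, v j ≠ 0) (hv : Function.Injective v)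
    (hBethe : ∀ j, ∏ k : Fin M, (w k / v j - β) = (-1 : ℂ) ^ (N + 1))
    (v0 : ℂ) (hv0 : ∀ j, v0 ≠ v j) :
    Matrix.mulVec (Aop M β v0 w + Dop M β v0 w)
        (Matrix.mulVec (List.ofFn fun j : Fin N => Bop M β (v j) w).prod (vac M)) =
      ((∏ l : Fin M, (1 - β * v0 / w l)) * ∏ k : Fin N, (v0 + v k) / (v k - v0) +
          (∏ l : Fin M, (v0 / w l)) * ∏ k : Fin N, (v0 + v k) / (v0 - v k)) •
        Matrix.mulVec (List.ofFn fun j : Fin N => Bop M β (v j) w).prod (vac M) := by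
  rw [← betheVector_univ (hB := Bop_commute β hw), add_mulVec,
    Aop_mulVec_betheVector β hw hv univ fun j _ => hv0 j,
    Dop_mulVec_betheVector β hw hv univ fun j _ => hv0 j, add_add_add_comm, ← add_smul,
    ← sum_add_distrib, sum_eq_zero, add_zero]
  intro j _
  rw [← add_smul, unwanted_coeff_eq_zero β hw (hvne j) (hBethe j), zero_smul]

/-- Algebraic Bethe ansatz: if the Bethe ansatz equations hold, then the
N-particle state Ψ = B(v₁)⋯B(v_N)|Ω⟩ is an eigenvector of the transfer
matrix A(v)+D(v) with the stated eigenvalue. -/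
theorem bethe_eigenstate (M N : ℕ) (hN : 1 ≤ N) (hMN : N ≤ M) (β : ℂ)
    (w : Fin M → ℂ) (hw : ∀ l, w l ≠ 0)
    (v : Fin N → ℂ) (hvne : ∀ j, v j ≠ 0) (hv : Function.Injective v)
    (hBethe : ∀ j, ∏ k : Fin M, (w k / v j - β) = (-1 : ℂ) ^ (N + 1))
    (v0 : ℂ) (hv0 : ∀ j, v0 ≠ v j) :
    Matrix.mulVec (Aop M β v0 w + Dop M β v0 w)
        (Matrix.mulVec (List.ofFn fun j : Fin N => Bop M β (v j) w).prod (vac M)) =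
      ((∏ l : Fin M, (1 - β * v0 / w l)) * ∏ k : Fin N, (v0 + v k) / (v k - v0) +
          (∏ l : Fin M, (v0 / w l)) * ∏ k : Fin N, (v0 + v k) / (v0 - v k)) •
        Matrix.mulVec (List.ofFn fun j : Fin N => Bop M β (v j) w).prod (vac M) :=
  bethe_eigenstate_general M N β w hw v hvne hv hBethe v0 hv0
end
end

section
/- Interlacing is equivalent to admissibility: let M ≥ 1, N ≥ 0, let m = (m₁,…,m_M) ∈ ℕ^M with ∑_j m_j = N+1 and n = (n₁,…,n_M) ∈ ℕ^M with ∑_j n_j = N. Let y = (y₁ ≥ y₂ ≥ ⋯ ≥ y_{N+1}) be the partition having exactly m_i parts equal to i for each 1 ≤ i ≤ M, and let x = (x₁ ≥ ⋯ ≥ x_N) be the partition having exactly n_i parts equal to i. Then the interlacing condition y_j ≥ x_j ≥ y_{j+1} for all 1 ≤ j ≤ N holds if and only if 0 ≤ ∑_{k=j}^M m_k − ∑_{k=j}^M n_k ≤ 1 for all 1 ≤ j ≤ M. -/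
/-- For a weakly decreasing `f : Fin K → ℕ`, the index `j` is below the number
of entries `≥ v` iff `f j ≥ v`. -/
lemma count_lt_iff_le {K : ℕ} (f : Fin K → ℕ)
    (hf : ∀ j k : Fin K, j ≤ k → f k ≤ f j) (v : ℕ) (j : Fin K) :
    (j : ℕ) < (Finset.univ.filter fun l => v ≤ f l).card ↔ v ≤ f j := by
  constructor
  · intro h
    by_contra hv
    push_neg at hv
    have hsub : (Finset.univ.filter fun l => v ≤ f l) ⊆ Finset.Iio j := by
      intro l hl
      simp only [Finset.mem_filter, Finset.mem_univ, true_and] at hl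
      simp only [Finset.mem_Iio]
      by_contra hlt
      push_neg at hlt
      exact absurd (le_trans hl (hf j l hlt)) (not_le.mpr hv)
    have := Finset.card_le_card hsub
    rw [Fin.card_Iio] at this
    omega
  · intro h
    have hsub : Finset.Iic j ⊆ (Finset.univ.filter fun l => v ≤ f l) := by
      intro l hl
      simp only [Finset.mem_Iic] at hl
      simp only [Finset.mem_filter, Finset.mem_univ, true_and]
      exact le_trans h (hf l j hl)
    have := Finset.card_le_card hsub
    rw [Fin.card_Iic] at this
    omega

/-- If the counts of the values `1, …, M` of `f` add up to `K`, every value of `f`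
is of the form `i + 1` with `i : Fin M`. -/
lemma all_vals {M K : ℕ} (f : Fin K → ℕ) (c : Fin M → ℕ)
    (hc : ∀ i : Fin M, (Finset.univ.filter fun l => f l = (i : ℕ) + 1).card = c i)
    (hsum : ∑ i : Fin M, c i = K) :
    ∀ l : Fin K, ∃ i : Fin M, f l = (i : ℕ) + 1 := by
  set S : Finset (Fin K) :=
    Finset.univ.biUnion (fun i : Fin M => Finset.univ.filter fun l => f l = (i : ℕ) + 1) with hS
  have hdisj : ∀ i : Fin M, i ∈ Finset.univ → ∀ i' : Fin M, i' ∈ Finset.univ → i ≠ i' →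
      Disjoint (Finset.univ.filter fun l : Fin K => f l = (i : ℕ) + 1)
        (Finset.univ.filter fun l : Fin K => f l = (i' : ℕ) + 1) := by
    intro i _ i' _ hne
    rw [Finset.disjoint_left]
    intro l hl hl'
    simp only [Finset.mem_filter, Finset.mem_univ, true_and] at hl hl'
    exact absurd (Fin.ext (by omega : (i : ℕ) = i')) hne
  have hcard : S.card = K := by
    rw [hS, Finset.card_biUnion hdisj]
    simp only [hc]
    exact hsum
  have huniv : S = Finset.univ := by
    apply Finset.eq_univ_of_card
    rw [hcard, Fintype.card_fin]
  intro l
  have : l ∈ S := huniv ▸ Finset.mem_univ l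
  rw [hS, Finset.mem_biUnion] at this
  obtain ⟨i, _, hi⟩ := this
  simp only [Finset.mem_filter, Finset.mem_univ, true_and] at hi
  exact ⟨i, hi⟩

/-- Tail sums of the counts equal counts of entries `≥ j + 1`. -/
lemma tail_sum_eq {M K : ℕ} (f : Fin K → ℕ) (c : Fin M → ℕ)
    (hc : ∀ i : Fin M, (Finset.univ.filter fun l => f l = (i : ℕ) + 1).card = c i)
    (hval : ∀ l : Fin K, ∃ i : Fin M, f l = (i : ℕ) + 1) (j : Fin M) :
    ∑ k ∈ Finset.Ici j, c k = (Finset.univ.filter fun l => (j : ℕ) + 1 ≤ f l).card := by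
  have hdisj : ∀ i : Fin M, i ∈ Finset.Ici j → ∀ i' : Fin M, i' ∈ Finset.Ici j → i ≠ i' →
      Disjoint (Finset.univ.filter fun l : Fin K => f l = (i : ℕ) + 1)
        (Finset.univ.filter fun l : Fin K => f l = (i' : ℕ) + 1) := by
    intro i _ i' _ hne
    rw [Finset.disjoint_left]
    intro l hl hl'
    simp only [Finset.mem_filter, Finset.mem_univ, true_and] at hl hl'
    exact absurd (Fin.ext (by omega : (i : ℕ) = i')) hne
  have hun : (Finset.univ.filter fun l => (j : ℕ) + 1 ≤ f l)
      = (Finset.Ici j).biUnion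
        (fun k : Fin M => Finset.univ.filter fun l => f l = (k : ℕ) + 1) := by
    ext l
    simp only [Finset.mem_filter, Finset.mem_univ, true_and, Finset.mem_biUnion,
      Finset.mem_Ici]
    constructor
    · intro h
      obtain ⟨i, hi⟩ := hval l
      refine ⟨i, ?_, hi⟩
      rw [Fin.le_def]
      omega
    · rintro ⟨k, hk, hfl⟩
      rw [Fin.le_def] at hk
      omega
  rw [hun, Finset.card_biUnion hdisj]
  exact Finset.sum_congr rfl (fun k _ => (hc k).symm)

/-- Interlacing of partitions is equivalent to admissibility of the
corresponding particle configurations.  Here m, n are particle configurations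
on M sites with total particle numbers N+1 and N respectively, and y, x are
the corresponding partitions: y is weakly decreasing with exactly m_i parts
equal to i, and x is weakly decreasing with exactly n_i parts equal to i. -/
theorem interlacing_iff_admissible (M N : ℕ) (hM : 1 ≤ M)
    (m n : Fin M → ℕ)
    (hm : ∑ i : Fin M, m i = N + 1) (hn : ∑ i : Fin M, n i = N)
    (y : Fin (N + 1) → ℕ) (x : Fin N → ℕ)
    (hydec : ∀ j k : Fin (N + 1), j ≤ k → y k ≤ y j)
    (hycount : ∀ i : Fin M,
      (Finset.univ.filter fun j : Fin (N + 1) => y j = (i : ℕ) + 1).card = m i)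
    (hxdec : ∀ j k : Fin N, j ≤ k → x k ≤ x j)
    (hxcount : ∀ i : Fin M,
      (Finset.univ.filter fun j : Fin N => x j = (i : ℕ) + 1).card = n i) :
    (∀ j : Fin N, x j ≤ y j.castSucc ∧ y j.succ ≤ x j) ↔
      (∀ j : Fin M,
        (∑ k ∈ Finset.Ici j, n k) ≤ (∑ k ∈ Finset.Ici j, m k) ∧
          (∑ k ∈ Finset.Ici j, m k) ≤ (∑ k ∈ Finset.Ici j, n k) + 1) := by
  have hyval := all_vals y m hycount hm
  have hxval := all_vals x n hxcount hn
  have hmt : ∀ j : Fin M, ∑ k ∈ Finset.Ici j, m k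
      = (Finset.univ.filter fun l => (j : ℕ) + 1 ≤ y l).card :=
    tail_sum_eq y m hycount hyval
  have hnt : ∀ j : Fin M, ∑ k ∈ Finset.Ici j, n k
      = (Finset.univ.filter fun l => (j : ℕ) + 1 ≤ x l).card :=
    tail_sum_eq x n hxcount hxval
  set A : ℕ → ℕ := fun v => (Finset.univ.filter fun l => v ≤ y l).card with hA
  set B : ℕ → ℕ := fun v => (Finset.univ.filter fun l => v ≤ x l).card with hB
  have hAle : ∀ v, A v ≤ N + 1 := fun v => by
    simpa using Finset.card_le_card (Finset.filter_subset _ (Finset.univ : Finset (Fin (N + 1))))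
  have hBle : ∀ v, B v ≤ N := fun v => by
    simpa using Finset.card_le_card (Finset.filter_subset _ (Finset.univ : Finset (Fin N)))
  have hAiff : ∀ (v : ℕ) (j : Fin (N + 1)), (j : ℕ) < A v ↔ v ≤ y j :=
    fun v j => count_lt_iff_le y hydec v j
  have hBiff : ∀ (v : ℕ) (j : Fin N), (j : ℕ) < B v ↔ v ≤ x j :=
    fun v j => count_lt_iff_le x hxdec v j
  constructor
  · -- interlacing → admissibility
    intro h j
    rw [hmt j, hnt j]
    change B ((j : ℕ) + 1) ≤ A ((j : ℕ) + 1) ∧ A ((j : ℕ) + 1) ≤ B ((j : ℕ) + 1) + 1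
    set v := (j : ℕ) + 1
    constructor
    · rcases Nat.eq_zero_or_pos (B v) with h0 | hpos
      · omega
      · have hlt : B v - 1 < N := by have := hBle v; omega
        set l : Fin N := ⟨B v - 1, hlt⟩
        have hxl : v ≤ x l := (hBiff v l).mp (by simp [l]; omega)
        have hyl : v ≤ y l.castSucc := le_trans hxl (h l).1
        have h4 := (hAiff v l.castSucc).mpr hyl
        have h5 : ((l.castSucc : Fin (N + 1)) : ℕ) = B v - 1 := rfl
        omega
    · rcases Nat.lt_or_ge (A v) 2 with h0 | h2
      · omega
      · have hlt : A v - 2 < N := by have := hAle v; omega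
        set l : Fin N := ⟨A v - 2, hlt⟩
        have hyl : v ≤ y l.succ := by
          apply (hAiff v l.succ).mp
          simp only [Fin.val_succ, l]
          omega
        have hxl : v ≤ x l := le_trans hyl (h l).2
        have := (hBiff v l).mpr hxl
        simp only [l] at this
        omega
  · -- admissibility → interlacing
    intro h j
    constructor
    · obtain ⟨i, hi⟩ := hxval j
      have h1 : (j : ℕ) < B ((i : ℕ) + 1) := (hBiff _ j).mpr (le_of_eq hi.symm)
      have h2 := (h i).1
      rw [hmt i, hnt i] at h2
      change B ((i : ℕ) + 1) ≤ A ((i : ℕ) + 1) at h2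
      have h3 : ((j.castSucc : Fin (N + 1)) : ℕ) < A ((i : ℕ) + 1) := by
        simp only [Fin.coe_castSucc]; omega
      have := (hAiff _ j.castSucc).mp h3
      omega
    · obtain ⟨i, hi⟩ := hyval j.succ
      have h1 : ((j.succ : Fin (N + 1)) : ℕ) < A ((i : ℕ) + 1) :=
        (hAiff _ j.succ).mpr (le_of_eq hi.symm)
      have h2 := (h i).2
      rw [hmt i, hnt i] at h2
      change A ((i : ℕ) + 1) ≤ B ((i : ℕ) + 1) + 1 at h2
      have h1' : (j : ℕ) + 1 < A ((i : ℕ) + 1) := by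
        have : ((j.succ : Fin (N + 1)) : ℕ) = (j : ℕ) + 1 := rfl
        omega
      have h3 : (j : ℕ) < B ((i : ℕ) + 1) := by omega
      have := (hBiff _ j).mp h3
      omega
end

section
/- Matrix elements of the six-vertex B-operator: let M ≥ 1, N ≥ 0, β, v ∈ ℂ with βv ≠ 1 and βv ≠ −1, and set z = v/(1−βv). Let m ∈ {0,1}^M with ∑ m_j = N+1, corresponding to the strict partition y = (y₁ > ⋯ > y_{N+1} ≥ 1), and n ∈ {0,1}^M with ∑ n_j = N, corresponding to the strict partition x = (x₁ > ⋯ > x_N ≥ 1). If y ≻ x then ⟨m| B(v) |n⟩ = (1+2βz)(1+βz)^{−(M+1)} · (2(1+βz)/(1+2βz))^{#(y|x)} · z^{(∑_{j=1}^{N+1} y_j) − (∑_{j=1}^N x_j)} · ∏_{j=1}^N (1 + 2βz(1 − δ_{x_j, y_{j+1}})), where the last product is taken to be 1 when N = 0; and ⟨m| B(v) |n⟩ = 0 if y ≻ x fails. -/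
/-!
The L-operator conserves (auxiliary state) + (site occupation), so in
⟨m|B(v)|n⟩ = (T_{M-1} ⋯ T_0)(0, 1), with T_t the 2 × 2 auxiliary transfer matrices of the sites,
only one sequence of auxiliary states can contribute: the state entering site t must be
#{parts of y > t} − #{parts of x > t}. This height stays in {0, 1} exactly when y ≻ x, and
otherwise the matrix element vanishes. In the variable z = v/(1 − βv) every nonzero Boltzmann
weight is a product of powers of z, 2, 1 + βz and 1 + 2βz, so along the path the element is
z^(Σ heights) (1+βz)^(−M) 2^A ((1+βz)/(1+2βz))^B (1+2βz)^C, where A, B count the sites with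
(m, n) = (1, 0) and (0, 1), and C the sites with n = 1 and height 0. Then Σ heights = Σy − Σx,
A = #(y|x), B = A − 1, and C = #{k | x_k ≠ y_{k+1}}.
-/

noncomputable section

/-- The homogeneous monodromy matrix T_a = L_{aM} ∘ ⋯ ∘ L_{a1}
(site 1 acts first) built from a common L-operator. -/
def monoH (M : ℕ) (L : Matrix (Fin 2 × Fin 2) (Fin 2 × Fin 2) ℂ) :
    Matrix (Fin 2 × (Fin M → Fin 2)) (Fin 2 × (Fin M → Fin 2)) ℂ :=
  (List.ofFn fun k : Fin M => siteOp M L k.rev).prod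

/-- B(v) = ⟨0|_a T_a(v) |1⟩_a for the homogeneous six-vertex model. -/
def BopH (M : ℕ) (β v : ℂ) : Matrix (Fin M → Fin 2) (Fin M → Fin 2) ℂ :=
  fun s s' => monoH M (L6 β v) (0, s) (1, s')

open Finset

namespace SixVertex

section DescProd

variable {α : Type*} [Monoid α]

/-- `descProd F j = F (j-1) * ⋯ * F 1 * F 0`. -/
def descProd (F : ℕ → α) (j : ℕ) : α :=
  (List.ofFn fun k : Fin j => F (j - 1 - k)).prod

@[simp] lemma descProd_zero (F : ℕ → α) : descProd F 0 = 1 := rfl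

lemma descProd_succ (F : ℕ → α) (j : ℕ) : descProd F (j + 1) = F j * descProd F j := by
  simp only [descProd, List.ofFn_succ, List.prod_cons, Fin.val_zero, Fin.val_succ]
  congr 3
  funext k
  congr 1
  omega

end DescProd

section Paths

lemma descProd_apply_of_path {ι R : Type*} [Fintype ι] [DecidableEq ι] [CommSemiring R]
    (F : ℕ → Matrix ι ι R) (p : ℕ → ι) (J : ℕ)
    (hF : ∀ j < J, ∀ a, a ≠ p (j + 1) → F j a (p j) = 0) (a : ι) :
    descProd F J a (p 0) = if a = p J then ∏ i ∈ range J, F i (p (i + 1)) (p i) else 0 := by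
  induction J generalizing a with
  | zero => simp [Matrix.one_apply]
  | succ J ih =>
    rw [descProd_succ, Matrix.mul_apply]
    simp only [ih (fun j hj => hF j (by omega)), mul_ite, mul_zero, sum_ite_eq', mem_univ,
      if_true, prod_range_succ]
    split_ifs with ha
    · rw [ha, mul_comm]
    · rw [hF J (by omega) a ha, zero_mul]

lemma height_mem_of_descProd_apply_ne_zero {R : Type*} [Semiring R] {d : ℕ} (F : ℕ → Matrix (Fin d) (Fin d) R) (h : ℕ → ℤ)
    (J : ℕ) (hF : ∀ j < J, ∀ a c, F j a c ≠ 0 → (a : ℤ) - c = h (j + 1) - h j)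
    {a b : Fin d} (hb : (b : ℤ) = h 0) (hne : descProd F J a b ≠ 0) :
    (a : ℤ) = h J ∧ ∀ i ≤ J, 0 ≤ h i ∧ h i < d := by
  induction J generalizing a with
  | zero =>
    have hab : a = b := by_contra fun hab => hne (Matrix.one_apply_ne hab)
    refine ⟨hab ▸ hb, fun i hi => ?_⟩
    obtain rfl : i = 0 := by omega
    rw [← hb]
    exact ⟨by positivity, by exact_mod_cast b.isLt⟩
  | succ J ih =>
    rw [descProd_succ, Matrix.mul_apply] at hne
    obtain ⟨c, -, hc⟩ := exists_ne_zero_of_sum_ne_zero hne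
    obtain ⟨hcJ, hle⟩ := ih (fun j hj => hF j (by omega)) (right_ne_zero_of_mul hc)
    have haJ : (a : ℤ) = h (J + 1) := by
      linarith [hF J (by omega) a c (left_ne_zero_of_mul hc)]
    refine ⟨haJ, fun i hi => ?_⟩
    rcases Nat.le_succ_iff.mp hi with hi | rfl
    · exact hle i hi
    · rw [← haJ]
      exact ⟨by positivity, by exact_mod_cast a.isLt⟩

end Paths

section SiteOperators

variable {M : ℕ} (L : Matrix (Fin 2 × Fin 2) (Fin 2 × Fin 2) ℂ)

lemma siteOp_mul_apply {κ : Type*} (j : Fin M) (A : Matrix (Fin 2 × (Fin M → Fin 2)) κ ℂ)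
    (a : Fin 2) (s : Fin M → Fin 2) (x : κ) :
    (siteOp M L j * A) (a, s) x =
      ∑ c, ∑ d, L (a, s j) (c, d) * A (c, Function.update s j d) x := by
  rw [Matrix.mul_apply, Fintype.sum_prod_type]
  refine sum_congr rfl fun c _ => ?_
  have hagree : univ.filter (fun t : Fin M → Fin 2 => ∀ k, k ≠ j → s k = t k) =
      univ.image (Function.update s j) := by
    ext t
    simp only [mem_filter, mem_univ, true_and, mem_image]
    constructor
    · intro ht
      refine ⟨t j, funext fun k => ?_⟩
      rcases eq_or_ne k j with rfl | hk
      · simp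
      · simp [hk, ht k hk]
    · rintro ⟨d, rfl⟩ k hk
      simp [hk]
  simp only [siteOp, mul_ite, mul_one, mul_zero, ite_mul, zero_mul]
  rw [← sum_filter, hagree, sum_image fun _ _ _ _ h => Function.update_injective s j h]
  simp

-- Padded with identities beyond the last site, so that partial products can be indexed by `ℕ`.
def siteOps (M : ℕ) (L : Matrix (Fin 2 × Fin 2) (Fin 2 × Fin 2) ℂ) (j : ℕ) :
    Matrix (Fin 2 × (Fin M → Fin 2)) (Fin 2 × (Fin M → Fin 2)) ℂ :=
  if h : j < M then siteOp M L ⟨j, h⟩ else 1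

def auxTransfer (m n : Fin M → Fin 2) (j : ℕ) : Matrix (Fin 2) (Fin 2) ℂ :=
  if h : j < M then fun a c => L (a, m ⟨j, h⟩) (c, n ⟨j, h⟩) else 1

lemma auxTransfer_apply (m n : Fin M → Fin 2) {j : ℕ} (hj : j < M) (a c : Fin 2) :
    auxTransfer L m n j a c = L (a, m ⟨j, hj⟩) (c, n ⟨j, hj⟩) := by
  simp [auxTransfer, hj]

lemma monoH_eq_descProd : monoH M L = descProd (siteOps M L) M := by
  unfold monoH descProd
  congr 2 with k
  rw [siteOps, dif_pos (by omega)]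
  congr
  ext
  simp only [Fin.val_rev]
  omega

lemma descProd_siteOps_apply (m n : Fin M → Fin 2) {j : ℕ} (hj : j ≤ M) (s : Fin M → Fin 2)
    (hs : ∀ k : Fin M, k < j → s k = m k) (a b : Fin 2) :
    descProd (siteOps M L) j (a, s) (b, n) =
      (if ∀ k : Fin M, j ≤ k → s k = n k then 1 else 0) * descProd (auxTransfer L m n) j a b := by
  induction j generalizing s a with
  | zero =>
    simp [Matrix.one_apply, funext_iff, ite_and]
  | succ j ih =>
    have hjM : j < M := hj
    set jf : Fin M := ⟨j, hjM⟩
    have hupdate (d : Fin 2) : ∀ k : Fin M, k < j → Function.update s jf d k = m k :=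
      fun k hk => by rw [Function.update_of_ne (Fin.ne_of_lt hk)]; exact hs k (by omega)
    have hagree (d : Fin 2) : (∀ k : Fin M, j ≤ k → Function.update s jf d k = n k) ↔
        d = n jf ∧ ∀ k : Fin M, j < k → s k = n k := by
      constructor
      · intro h
        refine ⟨by simpa using h jf le_rfl, fun k hk => ?_⟩
        have hkj : k ≠ jf := fun h => by rw [h] at hk; exact lt_irrefl _ hk
        simpa [Function.update_of_ne hkj] using h k (by omega)
      · rintro ⟨rfl, h⟩ k hk
        rcases eq_or_ne k jf with rfl | hkj
        · simp
        · rw [Function.update_of_ne hkj]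
          exact h k (by simp [Fin.ext_iff, jf] at hkj; omega)
    have hterm (c d : Fin 2) : descProd (siteOps M L) j (c, Function.update s jf d) (b, n) =
        (if d = n jf ∧ ∀ k : Fin M, j < k → s k = n k then 1 else 0) *
          descProd (auxTransfer L m n) j c b := by
      rw [ih (by omega) _ (hupdate d), if_congr (hagree d) rfl rfl]
    rw [descProd_succ, descProd_succ, show siteOps M L j = siteOp M L jf from dif_pos hjM,
      siteOp_mul_apply, Matrix.mul_apply]
    simp only [hterm, hs jf (by simp [jf]), auxTransfer_apply L m n hjM]
    by_cases h : ∀ k : Fin M, j < k → s k = n k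
    · simp only [and_iff_left h, ite_mul, one_mul, zero_mul, mul_ite, mul_zero, sum_ite_eq',
        mem_univ, if_true]
      exact (if_pos h).symm
    · simp [h]

lemma monoH_apply (m n : Fin M → Fin 2) (a b : Fin 2) :
    monoH M L (a, m) (b, n) = descProd (auxTransfer L m n) M a b := by
  rw [monoH_eq_descProd, descProd_siteOps_apply L m n le_rfl m (fun _ _ => rfl),
    if_pos fun k hk => absurd k.isLt (not_lt.mpr hk), one_mul]

end SiteOperators

/-- The entry `L6 β v (a', μ) (a, ν)` rewritten in `z = v / (1 - β * v)`: `a` is the auxiliary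
state entering the site, `μ` and `ν` are the site states in `⟨m|` and `|n⟩`, and the outgoing
auxiliary state `a'` is determined by `a' + μ = a + ν`. -/
def siteWeight (β z : ℂ) (a μ ν : Fin 2) : ℂ :=
  z ^ (a : ℕ) * (1 + β * z)⁻¹ * (if μ = 1 ∧ ν = 0 then 2 else 1) *
    (if μ = 0 ∧ ν = 1 then (1 + β * z) / (1 + 2 * β * z) else 1) *
    (if ν = 1 ∧ a = 0 then 1 + 2 * β * z else 1)

section Weights

variable {β v z : ℂ}

lemma L6_apply_of_add_ne {a' μ a ν : Fin 2} (h : (a' : ℕ) + μ ≠ a + ν) :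
    L6 β v (a', μ) (a, ν) = 0 := by
  fin_cases a' <;> fin_cases μ <;> fin_cases a <;> fin_cases ν <;> simp_all [L6]

lemma one_add_mul_eq (hv1 : β * v ≠ 1) (hz : z = v / (1 - β * v)) :
    1 + β * z = (1 - β * v)⁻¹ := by
  rw [hz]
  field_simp [sub_ne_zero.mpr (Ne.symm hv1)]
  ring

lemma one_add_two_mul_eq (hv1 : β * v ≠ 1) (hz : z = v / (1 - β * v)) :
    1 + 2 * β * z = (1 + β * v) * (1 - β * v)⁻¹ := by
  rw [hz]
  field_simp [sub_ne_zero.mpr (Ne.symm hv1)]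
  ring

lemma one_add_mul_ne_zero (hv1 : β * v ≠ 1) (hz : z = v / (1 - β * v)) : 1 + β * z ≠ 0 := by
  rw [one_add_mul_eq hv1 hz]
  exact inv_ne_zero (sub_ne_zero.mpr (Ne.symm hv1))

lemma one_add_two_mul_ne_zero (hv1 : β * v ≠ 1) (hv2 : β * v ≠ -1) (hz : z = v / (1 - β * v)) :
    1 + 2 * β * z ≠ 0 := by
  rw [one_add_two_mul_eq hv1 hz]
  exact mul_ne_zero (fun h => hv2 (by linear_combination h))
    (inv_ne_zero (sub_ne_zero.mpr (Ne.symm hv1)))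

lemma L6_apply_of_add_eq (hv1 : β * v ≠ 1) (hv2 : β * v ≠ -1) (hz : z = v / (1 - β * v))
    {a' μ a ν : Fin 2} (h : (a' : ℕ) + μ = a + ν) :
    L6 β v (a', μ) (a, ν) = siteWeight β z a μ ν := by
  have h1 : 1 - β * v ≠ 0 := sub_ne_zero.mpr (Ne.symm hv1)
  have h2 : 1 + β * v ≠ 0 := fun h => hv2 (by linear_combination h)
  have hW := one_add_mul_eq hv1 hz
  have hU := one_add_two_mul_eq hv1 hz
  fin_cases a' <;> fin_cases μ <;> fin_cases a <;> fin_cases ν <;>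
    simp_all [L6, siteWeight, div_eq_mul_inv] <;> field_simp

end Weights

section Parts

variable {P : ℕ} (y : Fin P → ℕ)

def numAbove (t : ℕ) : ℕ := #{j | t < y j}

lemma numAbove_le (t : ℕ) : numAbove y t ≤ P :=
  (card_filter_le _ _).trans_eq (card_fin P)

variable {y}

lemma numAbove_eq_succ_add (hy : Function.Injective y) (t : ℕ) :
    numAbove y t = numAbove y (t + 1) + if ∃ j, y j = t + 1 then 1 else 0 := by
  have hsplit : filter (fun j => t < y j) univ =
      filter (fun j => t + 1 < y j) univ ∪ filter (fun j => y j = t + 1) univ := by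
    ext j
    simp only [mem_filter, mem_union, mem_univ, true_and]
    omega
  rw [numAbove, numAbove, hsplit, card_union_of_disjoint (disjoint_filter.mpr fun j _ h => by omega)]
  congr 1
  split_ifs with hex
  · obtain ⟨j₀, hj₀⟩ := hex
    rw [card_eq_one]
    exact ⟨j₀, by ext j; simpa [← hj₀] using hy.eq_iff⟩
  · simpa using hex

lemma sum_numAbove {M : ℕ} (hyM : ∀ j, y j ≤ M) : ∑ t ∈ range M, numAbove y t = ∑ j, y j := by
  simp only [numAbove, card_filter]
  rw [sum_comm]
  refine sum_congr rfl fun j _ => ?_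
  have hfilter : filter (fun t => t < y j) (range M) = range (y j) := by
    ext t
    simp only [mem_filter, mem_range]
    have := hyM j
    omega
  rw [sum_boole, Nat.cast_id, hfilter, card_range]

lemma numAbove_of_le {M t : ℕ} (hyM : ∀ j, y j ≤ M) (ht : M ≤ t) : numAbove y t = 0 := by
  simp only [numAbove, card_eq_zero, filter_eq_empty_iff]
  exact fun j _ => by have := hyM j; omega

lemma numAbove_zero (hy : ∀ j, 0 < y j) : numAbove y 0 = P := by
  rw [numAbove, filter_true_of_mem fun j _ => hy j, card_univ, Fintype.card_fin]

lemma lt_numAbove_iff (hy : Antitone y) (t : ℕ) (i : Fin P) :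
    (i : ℕ) < numAbove y t ↔ t < y i := by
  constructor
  · intro hi
    by_contra hti
    have hsub : filter (fun j => t < y j) univ ⊆ Iio i := fun j hj => by
      simp only [mem_filter, mem_univ, true_and] at hj
      exact mem_Iio.mpr (lt_of_not_ge fun hij => hti (hj.trans_le (hy hij)))
    have := card_le_card hsub
    rw [Fin.card_Iio] at this
    exact absurd hi (not_lt.mpr this)
  · intro hti
    have hsub : Iic i ⊆ filter (fun j => t < y j) univ := fun j hj => by
      simpa using hti.trans_le (hy (mem_Iic.mp hj))
    have := card_le_card hsub
    rw [Fin.card_Iic] at this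
    exact this

lemma numAbove_apply (hy : StrictAnti y) (i : Fin P) : numAbove y (y i) = i := by
  have : filter (fun j => y i < y j) univ = Iio i := by
    ext j
    simp [hy.lt_iff_gt]
  rw [numAbove, this, Fin.card_Iio]

end Parts

section Interlacing

variable {N : ℕ} {y : Fin (N + 1) → ℕ} {x : Fin N → ℕ}

def Interlaces (y : Fin (N + 1) → ℕ) (x : Fin N → ℕ) : Prop :=
  ∀ j : Fin N, x j ≤ y j.castSucc ∧ y j.succ ≤ x j

lemma interlaces_iff_numAbove (hy : Antitone y) (hx : Antitone x) :
    Interlaces y x ↔ ∀ t, numAbove x t ≤ numAbove y t ∧ numAbove y t ≤ numAbove x t + 1 := by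
  constructor
  · intro hint t
    constructor
    · by_contra! h
      let k : Fin N := ⟨numAbove y t, h.trans_le (numAbove_le x t)⟩
      have hxk : t < x k := (lt_numAbove_iff hx t k).mp h
      have hyk : ¬ t < y k.castSucc := fun h' => lt_irrefl _ ((lt_numAbove_iff hy t _).mpr h')
      exact hyk (hxk.trans_le (hint k).1)
    · by_contra! h
      let k : Fin N := ⟨numAbove x t, by have := numAbove_le y t; omega⟩
      have hyk : t < y k.succ := (lt_numAbove_iff hy t k.succ).mp (by simpa [k] using h)
      have hxk : ¬ t < x k := fun h' => lt_irrefl _ ((lt_numAbove_iff hx t _).mpr h')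
      exact hxk (hyk.trans_le (hint k).2)
  · intro h j
    constructor
    · by_contra! hlt
      have hx' := (lt_numAbove_iff hx _ j).mpr hlt
      have hy' := (lt_numAbove_iff hy _ j.castSucc).not.mpr (lt_irrefl _)
      have := (h (y j.castSucc)).1
      simp only [Fin.val_castSucc] at hy'
      omega
    · by_contra! hlt
      have hy' := (lt_numAbove_iff hy _ j.succ).mpr hlt
      have hx' := (lt_numAbove_iff hx _ j).not.mpr (lt_irrefl _)
      have := (h (x j)).2
      simp only [Fin.val_succ] at hy'
      omega

lemma numAbove_pred_le_iff (hy : Antitone y) (hx : StrictAnti x) (hint : Interlaces y x)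
    (k : Fin N) (hxk : 0 < x k) :
    numAbove y (x k - 1) ≤ numAbove x (x k - 1) ↔ x k ≠ y k.succ := by
  have hx₁ := numAbove_eq_succ_add hx.injective (x k - 1)
  rw [Nat.sub_add_cancel hxk, numAbove_apply hx, if_pos ⟨k, rfl⟩] at hx₁
  rw [hx₁, ← not_lt, show (k : ℕ) + 1 = k.succ from (Fin.val_succ k).symm, lt_numAbove_iff hy]
  have := (hint k).2
  omega

/-- The auxiliary state entering site `t` (counted from `0`) on the only sequence of auxiliary
states of nonzero weight. -/
def heightPath (y : Fin (N + 1) → ℕ) (x : Fin N → ℕ) (t : ℕ) : Fin 2 :=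
  if numAbove x t < numAbove y t then 1 else 0

lemma heightPath_add_numAbove (hy : Antitone y) (hx : Antitone x) (hint : Interlaces y x)
    (t : ℕ) : (heightPath y x t : ℕ) + numAbove x t = numAbove y t := by
  have := (interlaces_iff_numAbove hy hx).mp hint t
  unfold heightPath
  split_ifs <;> simp <;> omega

end Interlacing

section Occupations

variable {M P Q : ℕ} {m n : Fin M → Fin 2} {y : Fin P → ℕ} {x : Fin Q → ℕ}

lemma val_eq_ite_of_iff (hm : ∀ i : Fin M, m i = 1 ↔ ∃ j, y j = i + 1) (i : Fin M) :
    (m i : ℕ) = if ∃ j, y j = i + 1 then 1 else 0 := by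
  have := hm i
  generalize m i = a at this ⊢
  fin_cases a <;> simp_all

lemma numAbove_eq_succ_add_val (hy : Function.Injective y)
    (hm : ∀ i : Fin M, m i = 1 ↔ ∃ j, y j = i + 1) (i : Fin M) :
    numAbove y i = numAbove y (i + 1) + m i := by
  rw [val_eq_ite_of_iff hm, numAbove_eq_succ_add hy]

lemma card_filter_occupied (hy : Function.Injective y) (hyM : ∀ j, 1 ≤ y j ∧ y j ≤ M)
    (hm : ∀ i : Fin M, m i = 1 ↔ ∃ j, y j = i + 1) (R : ℕ → Prop) [DecidablePred R] :
    #{i | m i = 1 ∧ R (i + 1)} = #{j | R (y j)} := by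
  symm
  refine card_bij (fun j _ => ⟨y j - 1, by have := hyM j; omega⟩) ?_ ?_ ?_
  · intro j hj
    have := hyM j
    simp only [mem_filter, mem_univ, true_and] at hj ⊢
    exact ⟨(hm _).mpr ⟨j, by simp only; omega⟩, by simpa [Nat.sub_add_cancel this.1] using hj⟩
  · intro j₁ _ j₂ _ h
    have := hyM j₁
    have := hyM j₂
    exact hy (by simp only [Fin.mk.injEq] at h; omega)
  · intro i hi
    simp only [mem_filter, mem_univ, true_and] at hi
    obtain ⟨j, hj⟩ := (hm i).mp hi.1
    exact ⟨j, by simpa [hj] using hi.2, by ext; simp [hj]⟩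

lemma card_occupied_vacant (hy : Function.Injective y) (hyM : ∀ j, 1 ≤ y j ∧ y j ≤ M)
    (hm : ∀ i : Fin M, m i = 1 ↔ ∃ j, y j = i + 1) (hn : ∀ i : Fin M, n i = 1 ↔ ∃ k, x k = i + 1) :
    #{i | m i = 1 ∧ n i = 0} = #{j | ∀ k, x k ≠ y j} := by
  refine Eq.trans ?_ (card_filter_occupied hy hyM hm fun p => ∀ k, x k ≠ p)
  congr 1
  ext i
  simp only [mem_filter, mem_univ, true_and, ← not_exists, ← hn i]
  omega

lemma card_vacant_add_card_shared (hy : Function.Injective y) (hyM : ∀ j, 1 ≤ y j ∧ y j ≤ M)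
    (hm : ∀ i : Fin M, m i = 1 ↔ ∃ j, y j = i + 1) (hn : ∀ i : Fin M, n i = 1 ↔ ∃ k, x k = i + 1) :
    #{j | ∀ k, x k ≠ y j} + #{i | m i = 1 ∧ n i = 1} = P := by
  have hshared : #{i | m i = 1 ∧ n i = 1} = #{j | ∃ k, x k = y j} := by
    refine Eq.trans ?_ (card_filter_occupied hy hyM hm fun p => ∃ k, x k = p)
    simp only [hn]
  rw [hshared, add_comm]
  simpa using card_filter_add_card_filter_not (s := univ) (fun j => ∃ k, x k = y j)

lemma card_filter_add_one {y : Fin (Q + 1) → ℕ} (hy : Function.Injective y)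
    (hyM : ∀ j, 1 ≤ y j ∧ y j ≤ M) (hm : ∀ i : Fin M, m i = 1 ↔ ∃ j, y j = i + 1)
    (hx : Function.Injective x) (hxM : ∀ j, 1 ≤ x j ∧ x j ≤ M)
    (hn : ∀ i : Fin M, n i = 1 ↔ ∃ k, x k = i + 1) :
    #{i | m i = 0 ∧ n i = 1} + 1 = #{i | m i = 1 ∧ n i = 0} := by
  have hy' := card_vacant_add_card_shared hy hyM hm hn
  have hx' := card_vacant_add_card_shared hx hxM hn hm
  rw [← card_occupied_vacant hy hyM hm hn] at hy'
  rw [← card_occupied_vacant hx hxM hn hm] at hx'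
  simp only [and_comm (a := n _ = 1)] at hx'
  omega

end Occupations

lemma prod_one_add_mul_ite {ι R : Type*} [Fintype ι] [CommSemiring R] (p : ι → Prop)
    [DecidablePred p] (c : R) :
    ∏ i, (1 + c * if p i then 0 else 1) = (1 + c) ^ #{i | ¬ p i} := by
  rw [← prod_const, prod_filter]
  refine prod_congr rfl fun i _ => ?_
  split_ifs <;> simp

lemma prod_siteWeight {ι : Type*} [Fintype ι] (β z : ℂ) (a μ ν : ι → Fin 2) :
    ∏ i, siteWeight β z (a i) (μ i) (ν i) =
      z ^ (∑ i, (a i : ℕ)) * (1 + β * z)⁻¹ ^ Fintype.card ι * 2 ^ #{i | μ i = 1 ∧ ν i = 0} *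
        ((1 + β * z) / (1 + 2 * β * z)) ^ #{i | μ i = 0 ∧ ν i = 1} *
        (1 + 2 * β * z) ^ #{i | ν i = 1 ∧ a i = 0} := by
  simp only [siteWeight, prod_mul_distrib, prod_pow_eq_pow_sum, prod_const, prod_ite,
    one_pow, mul_one, card_univ]

section Evaluation

variable {M N : ℕ} {β v z : ℂ} {m n : Fin M → Fin 2} {y : Fin (N + 1) → ℕ} {x : Fin N → ℕ}

lemma BopH_eq_prod_siteWeight (hv1 : β * v ≠ 1) (hv2 : β * v ≠ -1) (hz : z = v / (1 - β * v))
    (hy : StrictAnti y) (hyM : ∀ j, 1 ≤ y j ∧ y j ≤ M)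
    (hm : ∀ i : Fin M, m i = 1 ↔ ∃ j, y j = i + 1)
    (hx : StrictAnti x) (hxM : ∀ j, 1 ≤ x j ∧ x j ≤ M)
    (hn : ∀ i : Fin M, n i = 1 ↔ ∃ j, x j = i + 1) (hint : Interlaces y x) :
    BopH M β v m n = ∏ i : Fin M, siteWeight β z (heightPath y x i) (m i) (n i) := by
  have hcons (i : Fin M) : (heightPath y x (i + 1) : ℕ) + m i = heightPath y x i + n i := by
    have := heightPath_add_numAbove hy.antitone hx.antitone hint i
    have := heightPath_add_numAbove hy.antitone hx.antitone hint (i + 1)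
    have := numAbove_eq_succ_add_val hy.injective hm i
    have := numAbove_eq_succ_add_val hx.injective hn i
    omega
  have hstart : heightPath y x 0 = 1 := by
    simp [heightPath, numAbove_zero fun j => (hyM j).1, numAbove_zero fun j => (hxM j).1]
  have hend : heightPath y x M = 0 := by
    simp [heightPath, numAbove_of_le (fun j => (hyM j).2) le_rfl,
      numAbove_of_le (fun j => (hxM j).2) le_rfl]
  have hpath : ∀ j < M, ∀ a, a ≠ heightPath y x (j + 1) →
      auxTransfer (L6 β v) m n j a (heightPath y x j) = 0 := fun j hj a ha => by
    rw [auxTransfer_apply _ _ _ hj]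
    refine L6_apply_of_add_ne fun h => ha (Fin.ext ?_)
    have := hcons ⟨j, hj⟩
    simp only at this
    omega
  rw [BopH, monoH_apply, ← hstart, descProd_apply_of_path _ _ M hpath, if_pos hend.symm,
    ← Fin.prod_univ_eq_prod_range]
  refine prod_congr rfl fun i _ => ?_
  rw [auxTransfer_apply _ _ _ i.isLt]
  exact L6_apply_of_add_eq hv1 hv2 hz (hcons i)

lemma BopH_eq_zero (hy : StrictAnti y) (hyM : ∀ j, 1 ≤ y j ∧ y j ≤ M)
    (hm : ∀ i : Fin M, m i = 1 ↔ ∃ j, y j = i + 1)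
    (hx : StrictAnti x) (hxM : ∀ j, 1 ≤ x j ∧ x j ≤ M)
    (hn : ∀ i : Fin M, n i = 1 ↔ ∃ j, x j = i + 1) (hint : ¬ Interlaces y x) :
    BopH M β v m n = 0 := by
  rw [BopH, monoH_apply]
  by_contra hne
  set h : ℕ → ℤ := fun t => (numAbove y t : ℤ) - numAbove x t
  have hcons : ∀ j < M, ∀ a c : Fin 2, auxTransfer (L6 β v) m n j a c ≠ 0 →
      (a : ℤ) - c = h (j + 1) - h j := fun j hj a c hac => by
    rw [auxTransfer_apply _ _ _ hj] at hac
    have := not_imp_comm.mp L6_apply_of_add_ne hac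
    have := numAbove_eq_succ_add_val hy.injective hm ⟨j, hj⟩
    have := numAbove_eq_succ_add_val hx.injective hn ⟨j, hj⟩
    simp only [h] at *
    omega
  have hstart : ((1 : Fin 2) : ℤ) = h 0 := by
    simp [h, numAbove_zero fun j => (hyM j).1, numAbove_zero fun j => (hxM j).1]
  obtain ⟨-, hbounds⟩ := height_mem_of_descProd_apply_ne_zero _ h M hcons hstart hne
  refine hint ((interlaces_iff_numAbove hy.antitone hx.antitone).mpr fun t => ?_)
  rcases le_or_gt t M with ht | ht
  · have := hbounds t ht
    simp only [h] at this
    omega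
  · simp [numAbove_of_le (fun j => (hyM j).2) ht.le, numAbove_of_le (fun j => (hxM j).2) ht.le]

lemma sum_heightPath (hy : Antitone y) (hyM : ∀ j, y j ≤ M) (hx : Antitone x)
    (hxM : ∀ j, x j ≤ M) (hint : Interlaces y x) :
    ∑ i : Fin M, (heightPath y x i : ℕ) = (∑ j, y j) - ∑ k, x k := by
  have hsum : ∑ t ∈ range M, ((heightPath y x t : ℕ) + numAbove x t) =
      ∑ t ∈ range M, numAbove y t :=
    sum_congr rfl fun t _ => heightPath_add_numAbove hy hx hint t
  rw [sum_add_distrib, sum_numAbove hyM, sum_numAbove hxM] at hsum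
  rw [Fin.sum_univ_eq_sum_range (fun t => (heightPath y x t : ℕ))]
  omega

lemma card_heightPath_eq_zero (hy : Antitone y) (hx : StrictAnti x)
    (hxM : ∀ j, 1 ≤ x j ∧ x j ≤ M) (hn : ∀ i : Fin M, n i = 1 ↔ ∃ j, x j = i + 1)
    (hint : Interlaces y x) :
    #{i | n i = 1 ∧ heightPath y x i = 0} = #{k | x k ≠ y k.succ} := by
  have hzero (t : ℕ) : heightPath y x t = 0 ↔ numAbove y t ≤ numAbove x t := by
    unfold heightPath
    split_ifs <;> simp <;> omega
  refine Eq.trans ?_ ((card_filter_occupied hx.injective hxM hn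
    fun p => numAbove y (p - 1) ≤ numAbove x (p - 1)).trans ?_)
  · simp only [hzero, Nat.add_sub_cancel]
  · congr 1
    ext k
    simp [numAbove_pred_le_iff hy hx hint k (hxM k).1]

end Evaluation

end SixVertex

open SixVertex in
theorem six_vertex_B_matrix_elements_general (M N : ℕ) (β v : ℂ)
    (hv1 : β * v ≠ 1) (hv2 : β * v ≠ -1)
    (z : ℂ) (hz : z = v / (1 - β * v))
    (m : Fin M → Fin 2)
    (n : Fin M → Fin 2)
    (y : Fin (N + 1) → ℕ) (hydec : StrictAnti y)
    (hyrange : ∀ j, 1 ≤ y j ∧ y j ≤ M)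
    (hycorr : ∀ i : Fin M, m i = 1 ↔ ∃ j, y j = (i : ℕ) + 1)
    (x : Fin N → ℕ) (hxdec : StrictAnti x)
    (hxrange : ∀ j, 1 ≤ x j ∧ x j ≤ M)
    (hxcorr : ∀ i : Fin M, n i = 1 ↔ ∃ j, x j = (i : ℕ) + 1) :
    ((∀ j : Fin N, x j ≤ y j.castSucc ∧ y j.succ ≤ x j) →
      BopH M β v m n =
        ((1 + 2 * β * z) / (1 + β * z) ^ (M + 1)) *
          (2 * (1 + β * z) / (1 + 2 * β * z)) ^
            ((Finset.univ.filter fun j : Fin (N + 1) => ∀ k : Fin N, x k ≠ y j).card) *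
          z ^ ((∑ j : Fin (N + 1), y j) - (∑ j : Fin N, x j)) *
          ∏ j : Fin N, (1 + 2 * β * z * (if x j = y j.succ then 0 else 1))) ∧
      (¬ (∀ j : Fin N, x j ≤ y j.castSucc ∧ y j.succ ≤ x j) →
        BopH M β v m n = 0) := by
  refine ⟨fun hint => ?_, BopH_eq_zero hydec hyrange hycorr hxdec hxrange hxcorr⟩
  have hW := one_add_mul_ne_zero hv1 hz
  have hU := one_add_two_mul_ne_zero hv1 hv2 hz
  rw [BopH_eq_prod_siteWeight hv1 hv2 hz hydec hyrange hycorr hxdec hxrange hxcorr hint,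
    prod_siteWeight, Fintype.card_fin,
    sum_heightPath hydec.antitone (fun j => (hyrange j).2) hxdec.antitone (fun j => (hxrange j).2)
      hint,
    card_heightPath_eq_zero hydec.antitone hxdec hxrange hxcorr hint,
    ← card_occupied_vacant hydec.injective hyrange hycorr hxcorr,
    ← card_filter_add_one hydec.injective hyrange hycorr hxdec.injective hxrange hxcorr,
    prod_one_add_mul_ite]
  generalize 1 + 2 * β * z = U at hU ⊢
  generalize 1 + β * z = W at hW ⊢
  simp only [inv_pow, div_pow, mul_pow]
  field_simp
  ring

/-- Matrix elements of the six-vertex B-operator: for configurations m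
(with N+1 particles, corresponding to the strict partition y) and n (with N
particles, corresponding to the strict partition x), ⟨m|B(v)|n⟩ is given by
the stated product formula when y ≻ x, and vanishes otherwise. -/
theorem six_vertex_B_matrix_elements (M N : ℕ) (hM : 1 ≤ M) (β v : ℂ)
    (hv1 : β * v ≠ 1) (hv2 : β * v ≠ -1)
    (z : ℂ) (hz : z = v / (1 - β * v))
    (m : Fin M → Fin 2) (hm : ∑ j : Fin M, ((m j : ℕ)) = N + 1)
    (n : Fin M → Fin 2) (hn : ∑ j : Fin M, ((n j : ℕ)) = N)
    (y : Fin (N + 1) → ℕ) (hydec : StrictAnti y)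
    (hyrange : ∀ j, 1 ≤ y j ∧ y j ≤ M)
    (hycorr : ∀ i : Fin M, m i = 1 ↔ ∃ j, y j = (i : ℕ) + 1)
    (x : Fin N → ℕ) (hxdec : StrictAnti x)
    (hxrange : ∀ j, 1 ≤ x j ∧ x j ≤ M)
    (hxcorr : ∀ i : Fin M, n i = 1 ↔ ∃ j, x j = (i : ℕ) + 1) :
    ((∀ j : Fin N, x j ≤ y j.castSucc ∧ y j.succ ≤ x j) →
      BopH M β v m n =
        ((1 + 2 * β * z) / (1 + β * z) ^ (M + 1)) *
          (2 * (1 + β * z) / (1 + 2 * β * z)) ^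
            ((Finset.univ.filter fun j : Fin (N + 1) => ∀ k : Fin N, x k ≠ y j).card) *
          z ^ ((∑ j : Fin (N + 1), y j) - (∑ j : Fin N, x j)) *
          ∏ j : Fin N, (1 + 2 * β * z * (if x j = y j.succ then 0 else 1))) ∧
      (¬ (∀ j : Fin N, x j ≤ y j.castSucc ∧ y j.succ ≤ x j) →
        BopH M β v m n = 0) :=
  six_vertex_B_matrix_elements_general M N β v hv1 hv2 z hz m n y hydec hyrange hycorr x hxdec
    hxrange hxcorr
end
end

section
/- Dual Cauchy identity in determinant form: let M ≥ N ≥ 1, let z₁,…,z_N ∈ ℂ be pairwise distinct, y₁,…,y_N ∈ ℂ be pairwise distinct, and z_j ≠ y_k for all j,k. Then ∑_λ s_λ(z₁,…,z_N) · s_{λ∨}(y₁,…,y_N) = ∏_{1≤j<k≤N} 1/((z_k−z_j)(y_j−y_k)) · det( (z_j^M − y_k^M)/(z_j − y_k) )_{1≤j,k≤N}, where the sum runs over all partitions λ = (λ₁ ≥ ⋯ ≥ λ_N ≥ 0) with λ₁ ≤ M−N, and λ∨ denotes the partition λ∨_j = M − N − λ_{N+1−j}. -/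
/-!
Writing `(z^M - y^M)/(z - y) = ∑_{m < M} z^m y^(M-1-m)` factors the matrix on the right as
`(z_j^m)_{j,m} * (y_k^(M-1-m))_{m,k}`, an `N × M` times an `M × N` product, so by Cauchy–Binet
its determinant is the sum, over strictly increasing `f : Fin N → Fin M`, of the products of the
corresponding maximal minors. Such `f` are exactly `f k = λ_{N-1-k} + k` for partitions
`λ ⊆ (M-N)^N`; the `z`-minor is then the alternant of `λ` with its columns reversed and the
`y`-minor is the transposed alternant of `λ∨`. The column reversal turns the denominator
`∏_{j<k} (z_j - z_k)` of `s_λ(z)` into the Vandermonde determinant `∏_{j<k} (z_k - z_j)`.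
-/

noncomputable section

/-- The Schur polynomial s_λ(z₁,…,z_N) = det(z_j^{λ_k+N−k}) / ∏_{j<k}(z_j−z_k). -/
def schur (N : ℕ) (lam : Fin N → ℕ) (z : Fin N → ℂ) : ℂ :=
  (Matrix.of fun j k : Fin N => z j ^ (lam k + (N - 1 - (k : ℕ)))).det /
    ∏ j : Fin N, ∏ k ∈ Finset.Ioi j, (z j - z k)

open Finset Matrix

theorem Fin.val_add_le_of_strictMono {n m : ℕ} {f : Fin n → Fin m} (hf : StrictMono f)
    {i j : Fin n} (hij : i ≤ j) : (f i : ℕ) + j ≤ f j + i := by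
  have h := card_le_card_of_injOn f (fun k hk => ?_) hf.injective.injOn (s := Icc i j)
    (t := Icc (f i) (f j))
  · rw [Fin.card_Icc, Fin.card_Icc] at h
    have := hf.monotone hij
    rw [Fin.le_def] at hij this
    omega
  · rw [Finset.mem_coe, mem_Icc] at hk ⊢
    exact ⟨hf.monotone hk.1, hf.monotone hk.2⟩

theorem Finset.sum_injective_eq_sum_strictMono_sum_perm {n : ℕ} {α β : Type*} [LinearOrder α]
    [Fintype α] [DecidableEq α] [AddCommMonoid β] (F : (Fin n → α) → β) :
    ∑ r : Fin n → α with Function.Injective r, F r =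
      ∑ f : Fin n → α with StrictMono f, ∑ σ : Equiv.Perm (Fin n), F (f ∘ σ) := by
  rw [← sum_product']
  refine (sum_nbij' (fun p : (Fin n → α) × Equiv.Perm (Fin n) => p.1 ∘ p.2)
    (fun r => (r ∘ Tuple.sort r, (Tuple.sort r)⁻¹)) ?_ ?_ ?_ ?_ fun _ _ => rfl).symm
  · rintro ⟨f, σ⟩ h
    simp only [mem_product, mem_filter_univ, mem_univ, and_true] at h ⊢
    exact h.injective.comp σ.injective
  · intro r hr
    simp only [mem_product, mem_filter_univ, mem_univ, and_true] at hr ⊢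
    exact (Tuple.monotone_sort r).strictMono_of_injective (hr.comp (Tuple.sort r).injective)
  · rintro ⟨f, σ⟩ h
    simp only [mem_product, mem_filter_univ, mem_univ, and_true] at h
    have hsort : Tuple.sort (f ∘ σ) = σ⁻¹ := by
      refine (Tuple.eq_sort_iff.2 ⟨?_, fun i j hij hfij => ?_⟩).symm
      · simpa [Function.comp_assoc] using h.monotone
      · simp only [Function.comp_apply, Equiv.Perm.coe_inv, Equiv.apply_symm_apply] at hfij
        exact absurd (h.injective hfij) hij.ne
    simp [hsort, Function.comp_assoc]
  · intro r _
    simp [Function.comp_assoc]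

namespace Matrix

variable {R : Type*} [CommRing R]

theorem det_mul_eq_sum_prod_mul_det_submatrix {n m : Type*} [Fintype n] [DecidableEq n]
    [Fintype m] (A : Matrix n m R) (B : Matrix m n R) :
    (A * B).det = ∑ r : n → m, (∏ i, A i (r i)) * (B.submatrix r id).det := by
  have hrows : A * B = fun i => ∑ k, A i k • B k := by
    ext i j
    simp [mul_apply, Finset.sum_apply]
  rw [det, hrows, ← AlternatingMap.coe_multilinearMap, MultilinearMap.map_sum]
  refine Finset.sum_congr rfl fun r _ => ?_
  rw [MultilinearMap.map_smul_univ]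
  rfl

theorem det_mul_eq_sum_strictMono {n m : ℕ} (A : Matrix (Fin n) (Fin m) R)
    (B : Matrix (Fin m) (Fin n) R) :
    (A * B).det = ∑ f : Fin n → Fin m with StrictMono f,
      (A.submatrix id f).det * (B.submatrix f id).det := by
  classical
  have hinj : (A * B).det = ∑ r : Fin n → Fin m with Function.Injective r,
      (∏ i, A i (r i)) * (B.submatrix r id).det := by
    rw [det_mul_eq_sum_prod_mul_det_submatrix, sum_filter_of_ne]
    intro r _ hr
    by_contra hnot
    obtain ⟨i, j, hij, hne⟩ := Function.not_injective_iff.1 hnot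
    have hrow : B.submatrix r id i = B.submatrix r id j :=
      funext fun k => by rw [submatrix_apply, submatrix_apply, hij]
    exact hr (by rw [det_zero_of_row_eq hne hrow, mul_zero])
  rw [hinj, sum_injective_eq_sum_strictMono_sum_perm]
  refine sum_congr rfl fun f _ => ?_
  have hperm : ∀ σ : Equiv.Perm (Fin n), (B.submatrix (f ∘ σ) id).det =
      Equiv.Perm.sign σ * (B.submatrix f id).det := fun σ =>
    det_permute σ (B.submatrix f id)
  simp_rw [hperm, ← mul_assoc, ← sum_mul]
  congr 1
  rw [← det_transpose, det_apply']
  refine sum_congr rfl fun σ _ => ?_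
  simp [mul_comm]

theorem of_pow_sub_pow_div_sub_eq_mul {K : Type*} [Field K] {n : ℕ} (M : ℕ) (z y : Fin n → K)
    (hzy : ∀ j k, z j ≠ y k) :
    (of fun j k => (z j ^ M - y k ^ M) / (z j - y k)) =
      (of fun j (m : Fin M) => z j ^ (m : ℕ)) * of fun (m : Fin M) k => y k ^ (M - 1 - m) := by
  ext j k
  rw [of_apply, mul_apply, ← (Commute.all _ _).geom_sum₂ (hzy j k),
    ← Fin.sum_univ_eq_sum_range]
  rfl

end Matrix

def staircaseShift {n m : ℕ} (h : n ≤ m) (l : Fin n → Fin (m - n + 1)) : Fin n → Fin m :=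
  fun k => ⟨l k.rev + k, by have := (l k.rev).isLt; omega⟩

theorem sum_antitone_eq_sum_strictMono {n m : ℕ} (h : n ≤ m) {β : Type*} [AddCommMonoid β]
    (F : (Fin n → Fin m) → β) :
    ∑ l : Fin n → Fin (m - n + 1) with Antitone l, F (staircaseShift h l) =
      ∑ f : Fin n → Fin m with StrictMono f, F f := by
  refine sum_nbij (staircaseShift h) (fun l hl => ?_) (fun l _ l' _ hll' => ?_)
    (fun f hf => ?_) fun _ _ => rfl
  · rw [mem_filter_univ] at hl ⊢
    intro a b hab
    have := hl (Fin.rev_le_rev.2 hab.le)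
    rw [Fin.lt_def] at hab ⊢
    simp only [staircaseShift]
    rw [Fin.le_def] at this
    omega
  · funext k
    have := congrArg (fun f => (f k.rev : ℕ)) hll'
    simp only [staircaseShift, Fin.rev_rev] at this
    exact Fin.ext (by omega)
  · rw [mem_coe, mem_filter_univ] at hf
    have hlow (k : Fin n) : (k : ℕ) ≤ f k := by
      have := Fin.val_add_le_of_strictMono hf (i := ⟨0, k.pos⟩) (j := k) (by simp [Fin.le_def])
      simp only at this
      omega
    have hup (k : Fin n) : (f k : ℕ) ≤ m - n + k := by
      have hlast : n - 1 < n := by have := k.isLt; omega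
      have := Fin.val_add_le_of_strictMono hf (i := k) (j := ⟨n - 1, hlast⟩)
        (Fin.le_def.2 (Nat.le_sub_one_of_lt k.isLt))
      have := (f ⟨n - 1, hlast⟩).isLt
      simp only at *
      omega
    refine ⟨fun k => ⟨f k.rev - k.rev, by have := hup k.rev; omega⟩, ?_, ?_⟩
    · rw [mem_coe, mem_filter_univ]
      intro j k hjk
      have := Fin.val_add_le_of_strictMono hf (Fin.rev_le_rev.2 hjk)
      rw [Fin.le_def]
      simp only
      omega
    · funext k
      have := hlow k
      simp only [staircaseShift, Fin.rev_rev]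
      exact Fin.ext (by simp only; omega)

theorem schur_eq_det_div_det_vandermonde (N : ℕ) (lam : Fin N → ℕ) (z : Fin N → ℂ) :
    schur N lam z = (of fun j k : Fin N => z j ^ (lam k.rev + k)).det / (vandermonde z).det := by
  have hnum : (of fun j k : Fin N => z j ^ (lam k.rev + k)) =
      (of fun j k : Fin N => z j ^ (lam k + (N - 1 - k))).submatrix id Fin.revPerm := by
    ext j k
    simp only [of_apply, submatrix_apply, id_eq, Fin.revPerm_apply, Fin.val_rev]
    congr 2
    omega
  have hden : vandermonde z = (projVandermonde 1 z).submatrix id Fin.revPerm := by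
    ext j k
    simp only [vandermonde, projVandermonde, rectVandermonde, of_apply, submatrix_apply, id_eq,
      Fin.revPerm_apply, Fin.rev_rev, Pi.one_apply, one_pow, one_mul]
  have hprod : ∏ j : Fin N, ∏ k ∈ Ioi j, (z j - z k) = (projVandermonde 1 z).det := by
    simp [det_projVandermonde]
  rw [schur, hnum, hden, det_permute', det_permute', hprod,
    mul_div_mul_left _ _ (by simp)]

open Classical in
theorem dual_cauchy_identity_general (M N : ℕ) (hMN : N ≤ M)
    (z : Fin N → ℂ) (y : Fin N → ℂ) (hzy : ∀ j k, z j ≠ y k) :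
    (∑ l : Fin N → Fin (M - N + 1),
        if (∀ j k : Fin N, j ≤ k → (l k : ℕ) ≤ (l j : ℕ)) then
          schur N (fun j => (l j : ℕ)) z *
            schur N (fun j => M - N - (l (Fin.rev j) : ℕ)) y
        else 0) =
      (∏ j : Fin N, ∏ k ∈ Finset.Ioi j, ((z k - z j) * (y j - y k))⁻¹) *
        (Matrix.of fun j k : Fin N => ((z j) ^ M - (y k) ^ M) / (z j - y k)).det := by
  have hpre : ∏ j : Fin N, ∏ k ∈ Ioi j, ((z k - z j) * (y j - y k))⁻¹ =
      ((vandermonde z).det * ∏ j : Fin N, ∏ k ∈ Ioi j, (y j - y k))⁻¹ := by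
    simp only [det_vandermonde, prod_inv_distrib, prod_mul_distrib, mul_inv]
  rw [of_pow_sub_pow_div_sub_eq_mul M z y hzy, det_mul_eq_sum_strictMono,
    ← sum_antitone_eq_sum_strictMono hMN, hpre, mul_sum, sum_filter]
  refine sum_congr rfl fun l _ => ?_
  have hminor : (of fun (m : Fin M) k => y k ^ (M - 1 - m)).submatrix (staircaseShift hMN l) id =
      (of fun j k : Fin N => y j ^ (M - N - (l k.rev : ℕ) + (N - 1 - k)))ᵀ := by
    ext m k
    have := (l m.rev).isLt
    simp only [submatrix_apply, of_apply, id_eq, transpose_apply, staircaseShift]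
    congr 1
    omega
  simp only [show (∀ j k : Fin N, j ≤ k → (l k : ℕ) ≤ l j) ↔ Antitone l from Iff.rfl]
  split_ifs
  · rw [schur_eq_det_div_det_vandermonde, schur, hminor, det_transpose, div_mul_div_comm,
      div_eq_inv_mul]
    rfl
  · rfl

open Classical in
/-- Dual Cauchy identity in determinant form: the sum over all partitions
λ ⊆ (M−N)^N (encoded by weakly decreasing functions Fin N → Fin (M−N+1)) of
s_λ(z)·s_{λ∨}(y), where λ∨_j = M−N−λ_{N+1−j}, equals the stated determinant. -/
theorem dual_cauchy_identity (M N : ℕ) (hN : 1 ≤ N) (hMN : N ≤ M)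
    (z : Fin N → ℂ) (hz : Function.Injective z)
    (y : Fin N → ℂ) (hy : Function.Injective y)
    (hzy : ∀ j k, z j ≠ y k) :
    (∑ l : Fin N → Fin (M - N + 1),
        if (∀ j k : Fin N, j ≤ k → (l k : ℕ) ≤ (l j : ℕ)) then
          schur N (fun j => (l j : ℕ)) z *
            schur N (fun j => M - N - (l (Fin.rev j) : ℕ)) y
        else 0) =
      (∏ j : Fin N, ∏ k ∈ Finset.Ioi j, ((z k - z j) * (y j - y k))⁻¹) *
        (Matrix.of fun j k : Fin N => ((z j) ^ M - (y k) ^ M) / (z j - y k)).det :=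
  dual_cauchy_identity_general M N hMN z y hzy
end
end
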